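/- arXiv:0903.4527 — 9 statements merged into one kernel-verified Lean document; each statement's English description precedes it below -/
import Mathlib

section
/- For every natural number n ≥ 0 and every real ξ > 0, f_n(ξ − ξ⁻¹) = (ξ^{n−1} − (−1)^{n−1} ξ^{1−n}) / (ξ + ξ⁻¹). -/
/-!
Binet's formula: for `a * b = -1` the sequence `a ^ k - b ^ k` satisfies the recurrence
`u (k + 2) = (a + b) * u (k + 1) + u k` defining `chebF · (a + b)`, and the two agree at the start.
Take `a = ξ` and `b = -ξ⁻¹`.
-/

/-- The polynomials `f_n` defined by `f_0 = 1`, `f_1 = 0`,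
`f_{n+1}(x) = x f_n(x) + f_{n-1}(x)` (a transformation of the
Chebyshev polynomials of the second kind). -/
def chebF : ℕ → ℝ → ℝ
  | 0, _ => 1
  | 1, _ => 0
  | n + 2, x => x * chebF (n + 1) x + chebF n x

theorem zpow_sub_zpow_add_two {K : Type*} [Field K] {a b : K} (ha : a ≠ 0) (hb : b ≠ 0)
    (k : ℤ) :
    a ^ (k + 2) - b ^ (k + 2) =
      (a + b) * (a ^ (k + 1) - b ^ (k + 1)) - a * b * (a ^ k - b ^ k) := by
  simp only [zpow_add₀ ha, zpow_add₀ hb, zpow_one, zpow_two]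
  ring

theorem sub_mul_chebF_add {a b : ℝ} (hab : a * b = -1) (n : ℕ) :
    (a - b) * chebF n (a + b) = a ^ ((n : ℤ) - 1) - b ^ ((n : ℤ) - 1) := by
  have ha : a ≠ 0 := left_ne_zero_of_mul (hab ▸ neg_ne_zero.mpr one_ne_zero)
  have hb : b ≠ 0 := right_ne_zero_of_mul (hab ▸ neg_ne_zero.mpr one_ne_zero)
  induction n using Nat.twoStepInduction with
  | zero =>
    have ha_inv : a⁻¹ = -b := inv_eq_of_mul_eq_one_right (by rw [mul_neg, hab, neg_neg])
    have hb_inv : b⁻¹ = -a := inv_eq_of_mul_eq_one_left (by rw [neg_mul, hab, neg_neg])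
    rw [chebF, mul_one, Nat.cast_zero, zero_sub, zpow_neg_one, zpow_neg_one, ha_inv, hb_inv]
    ring
  | one => simp [chebF]
  | more n ih₀ ih₁ =>
    push_cast at ih₁ ⊢
    rw [show (n : ℤ) + 2 - 1 = (n - 1) + 2 by ring, zpow_sub_zpow_add_two ha hb,
      show (n : ℤ) - 1 + 1 = n + 1 - 1 by ring, ← ih₀, ← ih₁, hab, chebF]
    ring

theorem chebF_add_of_mul_eq_neg_one {a b : ℝ} (hab : a * b = -1) (hne : a ≠ b) (n : ℕ) :
    chebF n (a + b) = (a ^ ((n : ℤ) - 1) - b ^ ((n : ℤ) - 1)) / (a - b) := by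
  rw [← sub_mul_chebF_add hab, mul_div_cancel_left₀ _ (sub_ne_zero.mpr hne)]

theorem stmt_0 (n : ℕ) (ξ : ℝ) (hξ : 0 < ξ) :
    chebF n (ξ - ξ⁻¹) =
      (ξ ^ ((n : ℤ) - 1) - (-1 : ℝ) ^ ((n : ℤ) - 1) * ξ ^ (1 - (n : ℤ))) / (ξ + ξ⁻¹) := by
  have hmul : ξ * -ξ⁻¹ = -1 := by rw [mul_neg, mul_inv_cancel₀ hξ.ne']
  have hne : ξ ≠ -ξ⁻¹ := by have := inv_pos.mpr hξ; linarith
  have hpow : (-ξ⁻¹) ^ ((n : ℤ) - 1) = (-1 : ℝ) ^ ((n : ℤ) - 1) * ξ ^ (1 - (n : ℤ)) := by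
    rw [neg_eq_neg_one_mul, mul_zpow, inv_zpow', neg_sub]
  simpa only [← sub_eq_add_neg, sub_neg_eq_add, hpow] using
    chebF_add_of_mul_eq_neg_one hmul hne n
end

section
/- Let {ξ_i}_{i∈V} be positive reals and {β_ij}_{ij∈E} arbitrary reals. Then Σ_{x : V → {±1}} ∏_{ij∈E} (1 + x_i x_j β_ij ξ_i^{−x_i} ξ_j^{−x_j}) ∏_{i∈V} ξ_i^{x_i}/(ξ_i + ξ_i⁻¹) = Σ_{s ⊆ E} ∏_{ij∈s} β_ij ∏_{i∈V} f_{d_i(s)}(ξ_i − ξ_i⁻¹). -/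
/-- The spin `+1` or `-1` associated to a Boolean. -/
def sgn (b : Bool) : ℤ := if b then 1 else -1

/-- `deg ep1 ep2 i s` is the number of edges in `s` incident to the node `i`,
where the two endpoints of an edge `e` are `ep1 e` and `ep2 e`. -/
def deg {V E : Type} [DecidableEq V] [DecidableEq E] (ep1 ep2 : E → V) (i : V)
    (s : Finset E) : ℕ :=
  (s.filter fun e => ep1 e = i ∨ ep2 e = i).card

open Finset

lemma chebF_sub_inv_mul_add_inv {ξ : ℝ} (hξ : ξ ≠ 0) (d : ℕ) :
    chebF d (ξ - ξ⁻¹) * (ξ + ξ⁻¹) = (-1) ^ d * ξ * ξ⁻¹ ^ d + ξ⁻¹ * ξ ^ d := by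
  have h : ξ * ξ⁻¹ = 1 := mul_inv_cancel₀ hξ
  induction d using Nat.twoStepInduction with
  | zero => simp [chebF]
  | one => simp [chebF]; ring
  | more n ih0 ih1 =>
    rw [chebF]
    linear_combination (ξ - ξ⁻¹) * ih1 + ih0 - ((-1) ^ n * ξ * ξ⁻¹ ^ n + ξ ^ n * ξ⁻¹) * h

noncomputable def spinWeight (ξ : ℝ) (b : Bool) : ℝ := sgn b * ξ ^ (-sgn b)

lemma sum_spinWeight_pow_mul {ξ : ℝ} (hξ : ξ ≠ 0) (d : ℕ) :
    ∑ b : Bool, spinWeight ξ b ^ d * (ξ ^ sgn b / (ξ + ξ⁻¹)) = (-1) ^ d * chebF d (ξ - ξ⁻¹) := by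
  have hden : ξ + ξ⁻¹ ≠ 0 := by
    field_simp
    positivity
  have hsq : (-1 : ℝ) ^ d * (-1) ^ d = 1 := by rw [← mul_pow]; norm_num
  simp only [Fintype.sum_bool, spinWeight, sgn, if_true, Bool.false_eq_true, if_false,
    Int.cast_one, Int.cast_neg, zpow_one, zpow_neg, inv_inv, one_mul, neg_one_mul]
  rw [mul_div_assoc', mul_div_assoc', ← add_div, div_eq_iff hden]
  linear_combination (-((-1 : ℝ) ^ d)) * chebF_sub_inv_mul_add_inv hξ d - (ξ * ξ⁻¹ ^ d) * hsq

lemma prod_mul_eq_prod_pow_deg {V E : Type} {M : Type*} [CommMonoid M] [Fintype V]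
    [DecidableEq V] [DecidableEq E] (ep1 ep2 : E → V) (hloop : ∀ e, ep1 e ≠ ep2 e)
    (h : V → M) (s : Finset E) :
    ∏ e ∈ s, h (ep1 e) * h (ep2 e) = ∏ i, h i ^ deg ep1 ep2 i s := by
  have incident (e : E) :
      ∏ i, (if ep1 e = i ∨ ep2 e = i then h i else 1) = h (ep1 e) * h (ep2 e) := by
    rw [← prod_filter, ← prod_pair (hloop e)]
    congr 1
    ext i
    simp [eq_comm]
  simp only [deg, ← prod_const, prod_filter]
  rw [prod_comm]
  exact prod_congr rfl fun e _ => (incident e).symm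

lemma prod_neg_one_pow_deg {V E : Type} {R : Type*} [CommRing R] [Fintype V]
    [DecidableEq V] [DecidableEq E] (ep1 ep2 : E → V) (hloop : ∀ e, ep1 e ≠ ep2 e)
    (s : Finset E) :
    ∏ i, (-1 : R) ^ deg ep1 ep2 i s = 1 := by
  simp [← prod_mul_eq_prod_pow_deg ep1 ep2 hloop (fun _ => (-1 : R))]

theorem stmt_2_general {V E : Type} [Fintype V] [DecidableEq V] [Fintype E] [DecidableEq E]
    (ep1 ep2 : E → V)
    -- the graph is simple: no loops and no multiple edges
    (hloop : ∀ e, ep1 e ≠ ep2 e)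
    (ξ : V → ℝ) (hξ : ∀ i, 0 < ξ i) (β : E → ℝ) :
    ∑ x : V → Bool,
      (∏ e : E, (1 + (sgn (x (ep1 e)) : ℝ) * (sgn (x (ep2 e)) : ℝ) * β e
          * ξ (ep1 e) ^ (-(sgn (x (ep1 e)))) * ξ (ep2 e) ^ (-(sgn (x (ep2 e)))))) *
        ∏ i : V, ξ i ^ (sgn (x i)) / (ξ i + (ξ i)⁻¹)
    = ∑ s : Finset E, (∏ e ∈ s, β e) * ∏ i : V, chebF (deg ep1 ep2 i s) (ξ i - (ξ i)⁻¹) := by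
  have edge (x : V → Bool) (e : E) :
      (sgn (x (ep1 e)) : ℝ) * (sgn (x (ep2 e)) : ℝ) * β e
          * ξ (ep1 e) ^ (-(sgn (x (ep1 e)))) * ξ (ep2 e) ^ (-(sgn (x (ep2 e))))
        = β e * (spinWeight (ξ (ep1 e)) (x (ep1 e)) * spinWeight (ξ (ep2 e)) (x (ep2 e))) := by
    simp only [spinWeight]
    ring
  have summand (s : Finset E) (x : V → Bool) :
      (∏ e ∈ s, β e * (spinWeight (ξ (ep1 e)) (x (ep1 e)) * spinWeight (ξ (ep2 e)) (x (ep2 e))))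
          * ∏ i, ξ i ^ sgn (x i) / (ξ i + (ξ i)⁻¹)
        = (∏ e ∈ s, β e) * ∏ i, spinWeight (ξ i) (x i) ^ deg ep1 ep2 i s
          * (ξ i ^ sgn (x i) / (ξ i + (ξ i)⁻¹)) := by
    rw [prod_mul_distrib, prod_mul_eq_prod_pow_deg ep1 ep2 hloop fun i => spinWeight (ξ i) (x i),
      mul_assoc, ← prod_mul_distrib]
  simp_rw [edge, prod_one_add, powerset_univ, sum_mul]
  rw [sum_comm]
  refine sum_congr rfl fun s _ => ?_
  simp_rw [summand, ← mul_sum]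
  rw [← Fintype.prod_sum fun i b =>
    spinWeight (ξ i) b ^ deg ep1 ep2 i s * (ξ i ^ sgn b / (ξ i + (ξ i)⁻¹))]
  simp_rw [sum_spinWeight_pow_mul (hξ _).ne']
  rw [prod_mul_distrib, prod_neg_one_pow_deg ep1 ep2 hloop, one_mul]

theorem stmt_2 {V E : Type} [Fintype V] [DecidableEq V] [Fintype E] [DecidableEq E]
    (ep1 ep2 : E → V)
    -- the graph is simple: no loops and no multiple edges
    (hloop : ∀ e, ep1 e ≠ ep2 e)
    (hsimple : ∀ e e',
      (ep1 e = ep1 e' ∧ ep2 e = ep2 e') ∨ (ep1 e = ep2 e' ∧ ep2 e = ep1 e') → e = e')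
    (ξ : V → ℝ) (hξ : ∀ i, 0 < ξ i) (β : E → ℝ) :
    ∑ x : V → Bool,
      (∏ e : E, (1 + (sgn (x (ep1 e)) : ℝ) * (sgn (x (ep2 e)) : ℝ) * β e
          * ξ (ep1 e) ^ (-(sgn (x (ep1 e)))) * ξ (ep2 e) ^ (-(sgn (x (ep2 e)))))) *
        ∏ i : V, ξ i ^ (sgn (x i)) / (ξ i + (ξ i)⁻¹)
    = ∑ s : Finset E, (∏ e ∈ s, β e) * ∏ i : V, chebF (deg ep1 ep2 i s) (ξ i - (ξ i)⁻¹) :=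
  stmt_2_general ep1 ep2 hloop ξ hξ β
end

section
/- At any LBP fixed point, Z / Z_B = Σ_{x : V → {±1}} ∏_{ij∈E} ( b_ij(x_i,x_j) / (b_i(x_i) b_j(x_j)) ) ∏_{i∈V} b_i(x_i). -/
/-!
Write `M_i = ∏_{e ∋ i} m_{e,i}` for the product of all messages into `i` (so `c_i b_i = M_i`)
and `M_{i∖e}` for the same product without the message along `e`, so that
`b_e = cE_e⁻¹ ψ_e M_{i∖e} M_{j∖e}` for `e = ij`. Since every message into `i` is omitted from
exactly one of the `d_i` cavity products, `∏_{e ∋ i} M_{i∖e} = M_i ^ (d_i - 1)`; hence every summand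
on the right equals `∏_e ψ_e(x) / W` with `W = ∏_e cE_e ∏_i c_i ^ (1 - d_i)`.
The fixed-point equations make `b_i` the marginals of `b_e`, and taking expectations of
`log ψ_e - log b_e = log cE_e - log M_{i∖e} - log M_{j∖e}` collapses `log Z_B` to `log W`.
-/

open Finset Real

@[to_additive]
theorem prod_prod_erase_mul_prod {ι M : Type*} [CommMonoid M] [DecidableEq ι]
    (s : Finset ι) (g : ι → M) :
    (∏ i ∈ s, ∏ j ∈ s.erase i, g j) * ∏ i ∈ s, g i = (∏ i ∈ s, g i) ^ #s := by
  rw [← prod_mul_distrib, ← prod_const]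
  exact prod_congr rfl fun i hi => prod_erase_mul s g hi

section Marginals

variable {α β : Type*} [Fintype α] [Fintype β]

theorem sum_eq_of_fixedPoint {q ψ : α → β → ℝ} {P m b : α → ℝ} {Q : β → ℝ}
    {k lam C : ℝ} (hq : ∀ x y, q x y = k * ψ x y * P x * Q y)
    (hfix : ∀ x, lam * m x = ∑ y, ψ x y * Q y) (hP : ∀ x, P x * m x = C * b x)
    (hb : ∑ x, b x = 1) (hq1 : ∑ x, ∑ y, q x y = 1) (x : α) :
    ∑ y, q x y = b x := by
  have hrow : ∀ x, ∑ y, q x y = k * lam * C * b x := fun x => calc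
    ∑ y, q x y = k * P x * ∑ y, ψ x y * Q y := by
      rw [mul_sum]; exact sum_congr rfl fun y _ => by rw [hq]; ring
    _ = k * lam * (P x * m x) := by rw [← hfix]; ring
    _ = k * lam * C * b x := by rw [hP]; ring
  have hkC : k * lam * C = 1 := by
    simpa only [hrow, ← mul_sum, hb, mul_one] using hq1
  rw [hrow, hkC, one_mul]

theorem mul_log_sub_mul_log_of_eq {q ψ P Q k : ℝ} (hq : q = k⁻¹ * ψ * P * Q) :
    q * log ψ - q * log q = q * (log k - log P - log Q) := by
  rcases eq_or_ne q 0 with h0 | h0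
  · simp [h0]
  have hψ : ψ ≠ 0 := by rintro rfl; simp_all
  have hP : P ≠ 0 := by rintro rfl; simp_all
  have hQ : Q ≠ 0 := by rintro rfl; simp_all
  have hk : k ≠ 0 := by rintro rfl; simp_all
  rw [hq, log_mul (by simp [*]) hQ, log_mul (by simp [*]) hP, log_mul (by simp [*]) hψ,
    log_inv]
  ring

theorem sum_mul_log_sub_sum_mul_log_of_eq {q ψ : α → β → ℝ} {P p : α → ℝ} {Q r : β → ℝ}
    {k : ℝ} (hq : ∀ x y, q x y = k⁻¹ * ψ x y * P x * Q y)
    (hp : ∀ x, ∑ y, q x y = p x) (hr : ∀ y, ∑ x, q x y = r y) (hq1 : ∑ x, ∑ y, q x y = 1) :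
    (∑ x, ∑ y, q x y * log (ψ x y)) - ∑ x, ∑ y, q x y * log (q x y)
      = log k - ∑ x, p x * log (P x) - ∑ y, r y * log (Q y) := by
  rw [← sum_sub_distrib]
  simp_rw [← sum_sub_distrib, mul_log_sub_mul_log_of_eq (hq _ _), mul_sub, sum_sub_distrib]
  rw [sum_comm (f := fun x y => q x y * log (Q y))]
  simp only [hp] at hq1
  simp only [← sum_mul, hp, hr, hq1, one_mul]

end Marginals

section Graph

variable {V E α : Type*} [Fintype E] [DecidableEq V] (ep1 ep2 : E → V)

def incident (i : V) : Finset E :=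
  univ.filter fun e => ep1 e = i ∨ ep2 e = i

variable {ep1 ep2}

theorem mem_incident {e : E} {i : V} : e ∈ incident ep1 ep2 i ↔ ep1 e = i ∨ ep2 e = i := by
  simp [incident]

@[to_additive]
theorem prod_incident [Fintype V] {M : Type*} [CommMonoid M] (hloop : ∀ e, ep1 e ≠ ep2 e)
    (g : E → V → M) :
    ∏ i, ∏ e ∈ incident ep1 ep2 i, g e i = ∏ e, g e (ep1 e) * g e (ep2 e) := by
  rw [prod_comm' (t' := univ) (s' := fun e => {ep1 e, ep2 e})
    (by simp [mem_incident, eq_comm])]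
  exact prod_congr rfl fun e _ => prod_pair (hloop e)

variable (ep1 ep2)

def cavity [DecidableEq E] (m : E → V → α → ℝ) (e : E) (v : V) (y : α) : ℝ :=
  ∏ e' ∈ (incident ep1 ep2 v).erase e, m e' v y

variable {ep1 ep2}

theorem prod_filter_incident_ne_eq_cavity [DecidableEq E] (m : E → V → α → ℝ) (e : E)
    (v : V) (y : α) :
    ∏ e' ∈ univ.filter (fun e' => (ep1 e' = v ∨ ep2 e' = v) ∧ e' ≠ e), m e' v y
      = cavity ep1 ep2 m e v y := by
  rw [cavity]
  congr 1
  ext e'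
  simp [incident, and_comm]

theorem sum_log_cavity [DecidableEq E] {m : E → V → α → ℝ} {v : V} {y : α}
    (hm : ∀ e ∈ incident ep1 ep2 v, m e v y ≠ 0) :
    ∑ e ∈ incident ep1 ep2 v, log (cavity ep1 ep2 m e v y)
      = (#(incident ep1 ep2 v) - 1 : ℝ) * log (∏ e ∈ incident ep1 ep2 v, m e v y) := by
  have h := sum_sum_erase_add_sum (incident ep1 ep2 v) fun e => log (m e v y)
  rw [← log_prod hm, nsmul_eq_mul] at h
  have hcav : ∀ e ∈ incident ep1 ep2 v, log (cavity ep1 ep2 m e v y)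
      = ∑ e' ∈ (incident ep1 ep2 v).erase e, log (m e' v y) :=
    fun e _ => log_prod fun e' he' => hm e' (mem_of_mem_erase he')
  rw [sum_congr rfl hcav]
  linarith

theorem sum_sum_mul_log_cavity [DecidableEq E] [Fintype α] {m : E → V → α → ℝ}
    {c : V → ℝ} {b : V → α → ℝ} {v : V} (hc : c v ≠ 0) (hb0 : ∀ y, b v y ≠ 0)
    (hm : ∀ e ∈ incident ep1 ep2 v, ∀ y, m e v y ≠ 0)
    (hb : ∀ y, c v * b v y = ∏ e ∈ incident ep1 ep2 v, m e v y) (hbnorm : ∑ y, b v y = 1) :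
    ∑ e ∈ incident ep1 ep2 v, ∑ y, b v y * log (cavity ep1 ep2 m e v y)
      = (#(incident ep1 ep2 v) - 1 : ℝ) * (log (c v) + ∑ y, b v y * log (b v y)) := by
  rw [sum_comm]
  simp only [← mul_sum, sum_log_cavity fun e he => hm e he _, ← hb, log_mul hc (hb0 _)]
  simp only [mul_add, mul_left_comm _ (_ - 1 : ℝ)]
  rw [sum_add_distrib, ← mul_sum, ← mul_sum, ← sum_mul, hbnorm, one_mul]

end Graph

section BeliefPropagation

variable {V E α : Type*} [Fintype V] [Fintype E] [DecidableEq V]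
  {ep1 ep2 : E → V} {m : E → V → α → ℝ} {c : V → ℝ} {cE : E → ℝ} {b : V → α → ℝ}
  {ψ bE : E → α → α → ℝ}

variable (ep1 ep2) in
noncomputable def betheNormalizer (c : V → ℝ) (cE : E → ℝ) : ℝ :=
  (∏ e, cE e) * ∏ i, c i / c i ^ #(incident ep1 ep2 i)

theorem betheNormalizer_pos (hc : ∀ i, 0 < c i) (hcE : ∀ e, 0 < cE e) :
    0 < betheNormalizer ep1 ep2 c cE :=
  mul_pos (prod_pos fun e _ => hcE e) (prod_pos fun i _ => div_pos (hc i) (pow_pos (hc i) _))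

theorem log_betheNormalizer (hc : ∀ i, 0 < c i) (hcE : ∀ e, 0 < cE e) :
    log (betheNormalizer ep1 ep2 c cE)
      = ∑ e, log (cE e) - ∑ i, (#(incident ep1 ep2 i) - 1 : ℝ) * log (c i) := by
  rw [betheNormalizer, log_mul (prod_pos fun e _ => hcE e).ne'
      (prod_pos fun i _ => div_pos (hc i) (pow_pos (hc i) _)).ne',
    log_prod fun e _ => (hcE e).ne',
    log_prod fun i _ => (div_pos (hc i) (pow_pos (hc i) _)).ne']
  simp only [log_div (hc _).ne' (pow_pos (hc _) _).ne', log_pow, sub_mul, one_mul,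
    sum_sub_distrib]
  ring

variable [DecidableEq E]

theorem bethe_summand_eq (hloop : ∀ e, ep1 e ≠ ep2 e) (hc : ∀ i, c i ≠ 0)
    (hcE : ∀ e, cE e ≠ 0) (hb0 : ∀ i y, b i y ≠ 0)
    (hb : ∀ i y, c i * b i y = ∏ e ∈ incident ep1 ep2 i, m e i y)
    (hbE : ∀ e x1 x2, bE e x1 x2 = (cE e)⁻¹ * ψ e x1 x2
      * cavity ep1 ep2 m e (ep1 e) x1 * cavity ep1 ep2 m e (ep2 e) x2)
    (x : V → α) :
    (∏ e, bE e (x (ep1 e)) (x (ep2 e)) / (b (ep1 e) (x (ep1 e)) * b (ep2 e) (x (ep2 e))))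
        * ∏ i, b i (x i)
      = (∏ e, ψ e (x (ep1 e)) (x (ep2 e))) / betheNormalizer ep1 ep2 c cE := by
  have hbdeg : ∏ e, b (ep1 e) (x (ep1 e)) * b (ep2 e) (x (ep2 e))
      = ∏ i, b i (x i) ^ #(incident ep1 ep2 i) := by
    rw [← prod_incident hloop fun _ i => b i (x i)]
    simp only [prod_const]
  have hcav : (∏ e, cavity ep1 ep2 m e (ep1 e) (x (ep1 e))
        * cavity ep1 ep2 m e (ep2 e) (x (ep2 e))) * ∏ i, (c i * b i (x i))
      = ∏ i, (c i * b i (x i)) ^ #(incident ep1 ep2 i) := by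
    rw [← prod_incident hloop fun e i => cavity ep1 ep2 m e i (x i), ← prod_mul_distrib]
    refine prod_congr rfl fun i _ => ?_
    rw [hb]
    exact prod_prod_erase_mul_prod _ _
  have hbE' : ∏ e, bE e (x (ep1 e)) (x (ep2 e))
      = (∏ e, cE e)⁻¹ * (∏ e, ψ e (x (ep1 e)) (x (ep2 e)))
        * ∏ e, cavity ep1 ep2 m e (ep1 e) (x (ep1 e)) * cavity ep1 ep2 m e (ep2 e) (x (ep2 e)) := by
    simp only [hbE, prod_mul_distrib, prod_inv_distrib]
    ring
  have : ∏ i, c i ≠ 0 := prod_ne_zero_iff.2 fun i _ => hc i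
  have : ∏ e, cE e ≠ 0 := prod_ne_zero_iff.2 fun e _ => hcE e
  have : ∏ i, b i (x i) ≠ 0 := prod_ne_zero_iff.2 fun i _ => hb0 i (x i)
  have : ∏ i, c i ^ #(incident ep1 ep2 i) ≠ 0 :=
    prod_ne_zero_iff.2 fun i _ => pow_ne_zero _ (hc i)
  have : ∏ i, b i (x i) ^ #(incident ep1 ep2 i) ≠ 0 :=
    prod_ne_zero_iff.2 fun i _ => pow_ne_zero _ (hb0 i (x i))
  rw [prod_div_distrib, hbdeg, hbE', betheNormalizer, prod_div_distrib]
  simp only [mul_pow, prod_mul_distrib (f := c),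
    prod_mul_distrib (f := fun i => c i ^ #(incident ep1 ep2 i))] at hcav
  field_simp
  linear_combination (∏ e, ψ e (x (ep1 e)) (x (ep2 e))) * hcav

variable [Fintype α]

theorem bethe_free_energy_eq (hloop : ∀ e, ep1 e ≠ ep2 e) (hc : ∀ i, c i ≠ 0)
    (hb0 : ∀ i y, b i y ≠ 0) (hm : ∀ v, ∀ e ∈ incident ep1 ep2 v, ∀ y, m e v y ≠ 0)
    (hb : ∀ i y, c i * b i y = ∏ e ∈ incident ep1 ep2 i, m e i y)
    (hbE : ∀ e x1 x2, bE e x1 x2 = (cE e)⁻¹ * ψ e x1 x2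
      * cavity ep1 ep2 m e (ep1 e) x1 * cavity ep1 ep2 m e (ep2 e) x2)
    (hmarg1 : ∀ e x1, ∑ x2, bE e x1 x2 = b (ep1 e) x1)
    (hmarg2 : ∀ e x2, ∑ x1, bE e x1 x2 = b (ep2 e) x2)
    (hbnorm : ∀ i, ∑ y, b i y = 1) (hbEnorm : ∀ e, ∑ x1, ∑ x2, bE e x1 x2 = 1) :
    (∑ e, ∑ x1, ∑ x2, bE e x1 x2 * log (ψ e x1 x2))
        - (∑ e, ∑ x1, ∑ x2, bE e x1 x2 * log (bE e x1 x2))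
        + ∑ i, (#(incident ep1 ep2 i) - 1 : ℝ) * ∑ y, b i y * log (b i y)
      = ∑ e, log (cE e) - ∑ i, (#(incident ep1 ep2 i) - 1 : ℝ) * log (c i) := by
  have hedges := sum_congr rfl fun e (_ : e ∈ univ) =>
    sum_mul_log_sub_sum_mul_log_of_eq (hbE e) (hmarg1 e) (hmarg2 e) (hbEnorm e)
  have hvertices := sum_incident hloop fun e i => ∑ y, b i y * log (cavity ep1 ep2 m e i y)
  simp only [fun i => sum_sum_mul_log_cavity (hc i) (hb0 i) (hm i) (hb i) (hbnorm i)]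
    at hvertices
  rw [← sum_sub_distrib, hedges]
  simp only [sub_sub, sum_sub_distrib, ← hvertices, mul_add, sum_add_distrib]
  ring

end BeliefPropagation

theorem stmt_3_general {V E : Type} [Fintype V] [DecidableEq V] [Fintype E] [DecidableEq E]
    -- a finite connected simple graph, with edge endpoints `ep1 e`, `ep2 e`
    (ep1 ep2 : E → V)
    (hloop : ∀ e, ep1 e ≠ ep2 e)
    -- positive compatibility functions on the edges (spins: `true ↔ +1`, `false ↔ -1`)
    (ψ : E → Bool → Bool → ℝ)
    -- an LBP fixed point: positive messages `m e i`, the message toward the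
    -- endpoint `i` along the edge `e`, rescaled by some positive `lam e i`
    (m : E → V → Bool → ℝ)
    (hm1 : ∀ e x1, 0 < m e (ep1 e) x1) (hm2 : ∀ e x2, 0 < m e (ep2 e) x2)
    (lam : E → V → ℝ)
    (hfix2 : ∀ e x2, lam e (ep2 e) * m e (ep2 e) x2 =
      ∑ x1 : Bool, ψ e x1 x2 *
        ∏ e' ∈ Finset.univ.filter fun e' =>
          (ep1 e' = ep1 e ∨ ep2 e' = ep1 e) ∧ e' ≠ e, m e' (ep1 e) x1)
    (hfix1 : ∀ e x1, lam e (ep1 e) * m e (ep1 e) x1 =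
      ∑ x2 : Bool, ψ e x1 x2 *
        ∏ e' ∈ Finset.univ.filter fun e' =>
          (ep1 e' = ep2 e ∨ ep2 e' = ep2 e) ∧ e' ≠ e, m e' (ep2 e) x2)
    -- beliefs with their positive normalization constants
    (c : V → ℝ) (cE : E → ℝ) (hc : ∀ i, 0 < c i) (hcE : ∀ e, 0 < cE e)
    (b : V → Bool → ℝ) (bE : E → Bool → Bool → ℝ)
    (hb : ∀ i x, b i x =
      (c i)⁻¹ * ∏ e ∈ Finset.univ.filter (fun e => ep1 e = i ∨ ep2 e = i), m e i x)
    (hbE : ∀ e x1 x2, bE e x1 x2 = (cE e)⁻¹ * ψ e x1 x2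
      * (∏ e' ∈ Finset.univ.filter fun e' =>
          (ep1 e' = ep1 e ∨ ep2 e' = ep1 e) ∧ e' ≠ e, m e' (ep1 e) x1)
      * ∏ e' ∈ Finset.univ.filter fun e' =>
          (ep1 e' = ep2 e ∨ ep2 e' = ep2 e) ∧ e' ≠ e, m e' (ep2 e) x2)
    (hbnorm : ∀ i, ∑ x : Bool, b i x = 1)
    (hbEnorm : ∀ e, ∑ x1 : Bool, ∑ x2 : Bool, bE e x1 x2 = 1)
    -- the partition function and the Bethe approximation of it
    (Z ZB : ℝ)
    (hZ : Z = ∑ x : V → Bool, ∏ e : E, ψ e (x (ep1 e)) (x (ep2 e)))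
    (hZB : 0 < ZB)
    (hlogZB : Real.log ZB =
      (∑ e : E, ∑ x1 : Bool, ∑ x2 : Bool, bE e x1 x2 * Real.log (ψ e x1 x2))
      - (∑ e : E, ∑ x1 : Bool, ∑ x2 : Bool, bE e x1 x2 * Real.log (bE e x1 x2))
      + ∑ i : V,
          (((Finset.univ.filter fun e => ep1 e = i ∨ ep2 e = i).card : ℝ) - 1) *
            ∑ x : Bool, b i x * Real.log (b i x)) :
    Z / ZB = ∑ x : V → Bool,
      (∏ e : E, bE e (x (ep1 e)) (x (ep2 e)) /
          (b (ep1 e) (x (ep1 e)) * b (ep2 e) (x (ep2 e)))) *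
        ∏ i : V, b i (x i) := by
  simp only [prod_filter_incident_ne_eq_cavity] at hfix1 hfix2 hbE
  have hm : ∀ v, ∀ e ∈ incident ep1 ep2 v, ∀ y, 0 < m e v y := by
    rintro v e he y
    rcases mem_incident.1 he with rfl | rfl
    exacts [hm1 e y, hm2 e y]
  have hcb : ∀ i y, c i * b i y = ∏ e ∈ incident ep1 ep2 i, m e i y := fun i y => by
    rw [hb, mul_inv_cancel_left₀ (hc i).ne']
    rfl
  have hbpos : ∀ i y, 0 < b i y := fun i y =>
    (hb i y).symm ▸ mul_pos (inv_pos.2 (hc i)) (prod_pos fun e he => hm i e he y)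
  have hcav : ∀ v, ∀ e ∈ incident ep1 ep2 v, ∀ y,
      cavity ep1 ep2 m e v y * m e v y = c v * b v y :=
    fun v e he y => (prod_erase_mul _ _ he).trans (hcb v y).symm
  have hmarg1 : ∀ e x1, ∑ x2, bE e x1 x2 = b (ep1 e) x1 :=
    fun e => sum_eq_of_fixedPoint (hbE e) (hfix1 e)
      (hcav _ e (mem_incident.2 (.inl rfl))) (hbnorm _) (hbEnorm e)
  have hmarg2 : ∀ e x2, ∑ x1, bE e x1 x2 = b (ep2 e) x2 :=
    fun e => sum_eq_of_fixedPoint (q := fun x2 x1 => bE e x1 x2)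
      (k := (cE e)⁻¹) (fun x2 x1 => by rw [hbE]; ring) (hfix2 e)
      (hcav _ e (mem_incident.2 (.inr rfl))) (hbnorm _) (by rw [sum_comm, hbEnorm])
  have hZB_eq : ZB = betheNormalizer ep1 ep2 c cE := by
    refine log_injOn_pos hZB (betheNormalizer_pos hc hcE) ?_
    rw [log_betheNormalizer hc hcE, hlogZB]
    exact bethe_free_energy_eq hloop (fun i => (hc i).ne') (fun i y => (hbpos i y).ne')
      (fun v e he y => (hm v e he y).ne') hcb hbE hmarg1 hmarg2 hbnorm hbEnorm
  rw [hZ, hZB_eq, sum_div]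
  exact sum_congr rfl fun x _ => (bethe_summand_eq hloop (fun i => (hc i).ne')
    (fun e => (hcE e).ne') (fun i y => (hbpos i y).ne') hcb hbE x).symm

theorem stmt_3 {V E : Type} [Fintype V] [DecidableEq V] [Fintype E] [DecidableEq E]
    -- a finite connected simple graph, with edge endpoints `ep1 e`, `ep2 e`
    (ep1 ep2 : E → V)
    (hloop : ∀ e, ep1 e ≠ ep2 e)
    (hsimple : ∀ e e',
      (ep1 e = ep1 e' ∧ ep2 e = ep2 e') ∨ (ep1 e = ep2 e' ∧ ep2 e = ep1 e') → e = e')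
    (hconn : (SimpleGraph.fromRel fun a b => ∃ e, ep1 e = a ∧ ep2 e = b).Connected)
    -- positive compatibility functions on the edges (spins: `true ↔ +1`, `false ↔ -1`)
    (ψ : E → Bool → Bool → ℝ) (hψ : ∀ e x1 x2, 0 < ψ e x1 x2)
    -- an LBP fixed point: positive messages `m e i`, the message toward the
    -- endpoint `i` along the edge `e`, rescaled by some positive `lam e i`
    (m : E → V → Bool → ℝ)
    (hm1 : ∀ e x1, 0 < m e (ep1 e) x1) (hm2 : ∀ e x2, 0 < m e (ep2 e) x2)
    (lam : E → V → ℝ)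
    (hlam1 : ∀ e, 0 < lam e (ep1 e)) (hlam2 : ∀ e, 0 < lam e (ep2 e))
    (hfix2 : ∀ e x2, lam e (ep2 e) * m e (ep2 e) x2 =
      ∑ x1 : Bool, ψ e x1 x2 *
        ∏ e' ∈ Finset.univ.filter fun e' =>
          (ep1 e' = ep1 e ∨ ep2 e' = ep1 e) ∧ e' ≠ e, m e' (ep1 e) x1)
    (hfix1 : ∀ e x1, lam e (ep1 e) * m e (ep1 e) x1 =
      ∑ x2 : Bool, ψ e x1 x2 *
        ∏ e' ∈ Finset.univ.filter fun e' =>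
          (ep1 e' = ep2 e ∨ ep2 e' = ep2 e) ∧ e' ≠ e, m e' (ep2 e) x2)
    -- beliefs with their positive normalization constants
    (c : V → ℝ) (cE : E → ℝ) (hc : ∀ i, 0 < c i) (hcE : ∀ e, 0 < cE e)
    (b : V → Bool → ℝ) (bE : E → Bool → Bool → ℝ)
    (hb : ∀ i x, b i x =
      (c i)⁻¹ * ∏ e ∈ Finset.univ.filter (fun e => ep1 e = i ∨ ep2 e = i), m e i x)
    (hbE : ∀ e x1 x2, bE e x1 x2 = (cE e)⁻¹ * ψ e x1 x2
      * (∏ e' ∈ Finset.univ.filter fun e' =>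
          (ep1 e' = ep1 e ∨ ep2 e' = ep1 e) ∧ e' ≠ e, m e' (ep1 e) x1)
      * ∏ e' ∈ Finset.univ.filter fun e' =>
          (ep1 e' = ep2 e ∨ ep2 e' = ep2 e) ∧ e' ≠ e, m e' (ep2 e) x2)
    (hbnorm : ∀ i, ∑ x : Bool, b i x = 1)
    (hbEnorm : ∀ e, ∑ x1 : Bool, ∑ x2 : Bool, bE e x1 x2 = 1)
    -- the partition function and the Bethe approximation of it
    (Z ZB : ℝ)
    (hZ : Z = ∑ x : V → Bool, ∏ e : E, ψ e (x (ep1 e)) (x (ep2 e)))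
    (hZB : 0 < ZB)
    (hlogZB : Real.log ZB =
      (∑ e : E, ∑ x1 : Bool, ∑ x2 : Bool, bE e x1 x2 * Real.log (ψ e x1 x2))
      - (∑ e : E, ∑ x1 : Bool, ∑ x2 : Bool, bE e x1 x2 * Real.log (bE e x1 x2))
      + ∑ i : V,
          (((Finset.univ.filter fun e => ep1 e = i ∨ ep2 e = i).card : ℝ) - 1) *
            ∑ x : Bool, b i x * Real.log (b i x)) :
    Z / ZB = ∑ x : V → Bool,
      (∏ e : E, bE e (x (ep1 e)) (x (ep2 e)) /
          (b (ep1 e) (x (ep1 e)) * b (ep2 e) (x (ep2 e)))) *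
        ∏ i : V, b i (x i) :=
  stmt_3_general ep1 ep2 hloop ψ m hm1 hm2 lam hfix2 hfix1 c cE hc hcE b bE hb hbE hbnorm hbEnorm Z
    ZB hZ hZB hlogZB
end

section
/- With beliefs as in the context, Σ_{x : V → {±1}} ∏_{ij∈E} ( b_ij(x_i,x_j) / (b_i(x_i) b_j(x_j)) ) ∏_{i∈V} b_i(x_i) = Σ_{s ⊆ E} ∏_{ij∈s} β_ij ∏_{i∈V} f_{d_i(s)}(γ_i). (Combined with the identity Z/Z_B = Σ_x ∏_{ij} (b_ij/(b_i b_j)) ∏_i b_i, this is the loop series expansion Z = Z_B Σ_{s⊆E} r(s) with r(s) = ∏_{ij∈s} β_ij ∏_{i∈V} f_{d_i(s)}(γ_i).) -/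
/-!
Write each edge ratio `b_ij(x, y) / (b_i(x) b_j(y))` as `1 + β_ij u_i(x) u_j(y)`, where `u_i` is
(minus) the standardized spin at `i`: a `2 × 2` table with prescribed marginals has a single
degree of freedom, and `β_ij` measures it. Expanding the product over edges gives a sum over edge
subsets `s`, and under the product law `∏ b_i` the term of `s` factors into the vertex moments
`∑ₓ b_i(x) u_i(x)^{d_i(s)}`. Both values of `u_i` are roots of `u² = γ_i u + 1`, so these moments
obey the recurrence of `f_n`, with the same initial values `1` and `0`.
-/

open Finset

lemma eq_chebF_of_recurrence (m : ℕ → ℝ) (γ : ℝ) (h0 : m 0 = 1) (h1 : m 1 = 0)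
    (hrec : ∀ n, m (n + 2) = γ * m (n + 1) + m n) (n : ℕ) : m n = chebF n γ := by
  induction n using Nat.twoStepInduction with
  | zero => exact h0
  | one => exact h1
  | more n ih ih' => rw [hrec, ih, ih']; rfl

section Incidence

variable {V E : Type} [DecidableEq V]

lemma prod_comp_eq_prod_pow_card [Fintype V] {M : Type*} [CommMonoid M] (f : E → V)
    (g : V → M) (s : Finset E) : ∏ e ∈ s, g (f e) = ∏ i, g i ^ #{e ∈ s | f e = i} := by
  rw [← prod_fiberwise' s f g]
  exact prod_congr rfl fun i _ => prod_const _

variable [DecidableEq E] (ep1 ep2 : E → V)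

lemma deg_eq_card_add_card (hloop : ∀ e, ep1 e ≠ ep2 e) (i : V) (s : Finset E) :
    deg ep1 ep2 i s = #{e ∈ s | ep1 e = i} + #{e ∈ s | ep2 e = i} := by
  rw [deg, filter_or, card_union_of_disjoint]
  exact disjoint_filter.2 fun e _ h1 h2 => hloop e (h1.trans h2.symm)

lemma prod_edges_eq_prod_pow_deg [Fintype V] {M : Type*} [CommMonoid M]
    (hloop : ∀ e, ep1 e ≠ ep2 e) (g : V → M) (s : Finset E) :
    ∏ e ∈ s, g (ep1 e) * g (ep2 e) = ∏ i, g i ^ deg ep1 ep2 i s := by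
  simp only [prod_mul_distrib, prod_comp_eq_prod_pow_card, deg_eq_card_add_card ep1 ep2 hloop,
    pow_add]

theorem high_temperature_expansion [Fintype V] [Fintype E] (hloop : ∀ e, ep1 e ≠ ep2 e)
    {S R : Type*} [Fintype S] [CommSemiring R] (w u : V → S → R) (β : E → R) :
    ∑ x : V → S, (∏ e, (1 + β e * (u (ep1 e) (x (ep1 e)) * u (ep2 e) (x (ep2 e))))) *
        ∏ i, w i (x i)
      = ∑ s : Finset E, (∏ e ∈ s, β e) * ∏ i, ∑ y, w i y * u i y ^ deg ep1 ep2 i s := by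
  simp_rw [prod_one_add, powerset_univ, sum_mul]
  rw [sum_comm]
  refine sum_congr rfl fun s _ => ?_
  rw [Fintype.prod_sum, mul_sum]
  refine sum_congr rfl fun x _ => ?_
  rw [prod_mul_distrib, prod_edges_eq_prod_pow_deg ep1 ep2 hloop (fun i => u i (x i)),
    prod_mul_distrib]
  ring

end Incidence

/-- Minus the standardized spin `(x - m) / √(1 - m²)` of a law `p` on `{±1}` with mean
`m = p true - p false`; the sign makes `f_n(γ)` rather than `f_n(-γ)` appear below. -/
noncomputable def negStdSpin (p : Bool → ℝ) : Bool → ℝ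
  | true => -√(p true * p false) / p true
  | false => √(p true * p false) / p false

section Spin

variable {p : Bool → ℝ}

lemma mul_negStdSpin (hp : ∀ x, 0 < p x) (x : Bool) :
    p x * negStdSpin p x = (if x then -1 else 1) * √(p true * p false) := by
  cases x <;> simp [negStdSpin, mul_div_cancel₀ _ (hp _).ne']

lemma negStdSpin_sq (hp : ∀ x, 0 < p x) (x : Bool) :
    negStdSpin p x ^ 2
      = (p true - p false) / √(p true * p false) * negStdSpin p x + 1 := by
  have hs : √(p true * p false) ^ 2 = p true * p false :=
    Real.sq_sqrt (mul_pos (hp true) (hp false)).le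
  have := (Real.sqrt_pos.2 (mul_pos (hp true) (hp false))).ne'
  have := (hp true).ne'
  have := (hp false).ne'
  cases x <;> simp only [negStdSpin] <;> field_simp <;> linear_combination hs

lemma sum_mul_negStdSpin_pow (hp : ∀ x, 0 < p x) (hp1 : p true + p false = 1) (n : ℕ) :
    ∑ x, p x * negStdSpin p x ^ n = chebF n ((p true - p false) / √(p true * p false)) := by
  refine eq_chebF_of_recurrence (fun n => ∑ x, p x * negStdSpin p x ^ n) _
    (by simpa using hp1) ?_ (fun n => ?_) n
  · simp [mul_negStdSpin hp]
  · simp only [Fintype.sum_bool, pow_add _ n 2, negStdSpin_sq hp]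
    ring

end Spin

lemma eq_mul_one_add_negStdSpin {p q : Bool → ℝ} {P : Bool → Bool → ℝ} (hp : ∀ x, 0 < p x)
    (hq : ∀ y, 0 < q y) (hp1 : p true + p false = 1) (hPp : ∀ x, ∑ y, P x y = p x)
    (hPq : ∀ y, ∑ x, P x y = q y) (x y : Bool) :
    P x y = p x * q y * (1 + (P true true * P false false - P true false * P false true) /
      (√(p true * p false) * √(q true * q false)) * (negStdSpin p x * negStdSpin q y)) := by
  simp only [Fintype.sum_bool] at hPp hPq
  have hdet : P true true * P false false - P true false * P false true
      = P true true - p true * q true := by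
    linear_combination P true true * hPp false - P false true * hPp true - p true * hPq true
      + P true true * hp1
  have hsp := (Real.sqrt_pos.2 (mul_pos (hp true) (hp false))).ne'
  have hsq := (Real.sqrt_pos.2 (mul_pos (hq true) (hq false))).ne'
  have hq1 : q true + q false = 1 := by
    linear_combination hp1 - hPq true - hPq false + hPp true + hPp false
  rw [show ∀ c ux uy, p x * q y * (1 + c * (ux * uy)) = p x * q y + c * ((p x * ux) * (q y * uy))
    by intros; ring, mul_negStdSpin hp, mul_negStdSpin hq, hdet,
    show ∀ c s t u v : ℝ, c * (s * u * (t * v)) = s * t * (c * (u * v)) by intros; ring,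
    div_mul_cancel₀ _ (mul_ne_zero hsp hsq)]
  cases x <;> cases y <;> simp only [if_true, if_false, Bool.false_eq_true]
  · linear_combination hPp false - hPq true - p false * hq1 + q true * hp1
  · linear_combination hPq true - q true * hp1
  · linear_combination hPp true - p true * hq1
  · ring

theorem stmt_4_general {V E : Type} [Fintype V] [DecidableEq V] [Fintype E] [DecidableEq E]
    -- a finite simple graph, with edge endpoints `ep1 e`, `ep2 e`
    (ep1 ep2 : E → V)
    (hloop : ∀ e, ep1 e ≠ ep2 e)
    -- beliefs (spins: `true ↔ +1`, `false ↔ -1`)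
    (b : V → Bool → ℝ) (hbpos : ∀ i x, 0 < b i x)
    (hbnorm : ∀ i, b i true + b i false = 1)
    (bE : E → Bool → Bool → ℝ)
    (hmarg1 : ∀ e x1, ∑ x2 : Bool, bE e x1 x2 = b (ep1 e) x1)
    (hmarg2 : ∀ e x2, ∑ x1 : Bool, bE e x1 x2 = b (ep2 e) x2)
    -- the quantities `γ_i` and `β_ij`
    (γ : V → ℝ)
    (hγ : ∀ i, γ i = (b i true - b i false) / Real.sqrt (b i true * b i false))
    (β : E → ℝ)
    (hβ : ∀ e, β e =
      (bE e true true * bE e false false - bE e true false * bE e false true) /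
        (Real.sqrt (b (ep1 e) true * b (ep1 e) false) *
          Real.sqrt (b (ep2 e) true * b (ep2 e) false))) :
    ∑ x : V → Bool,
      (∏ e : E, bE e (x (ep1 e)) (x (ep2 e)) /
          (b (ep1 e) (x (ep1 e)) * b (ep2 e) (x (ep2 e)))) *
        ∏ i : V, b i (x i)
    = ∑ s : Finset E, (∏ e ∈ s, β e) * ∏ i : V, chebF (deg ep1 ep2 i s) (γ i) := by
  have hedge : ∀ (x : V → Bool) e,
      bE e (x (ep1 e)) (x (ep2 e)) / (b (ep1 e) (x (ep1 e)) * b (ep2 e) (x (ep2 e)))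
        = 1 + β e * (negStdSpin (b (ep1 e)) (x (ep1 e)) * negStdSpin (b (ep2 e)) (x (ep2 e))) := by
    intro x e
    rw [eq_mul_one_add_negStdSpin (hbpos _) (hbpos _) (hbnorm _) (hmarg1 e) (hmarg2 e), ← hβ,
      mul_div_cancel_left₀ _ (mul_pos (hbpos _ _) (hbpos _ _)).ne']
  simp_rw [hedge]
  refine (high_temperature_expansion ep1 ep2 hloop b (fun i => negStdSpin (b i)) β).trans ?_
  simp_rw [sum_mul_negStdSpin_pow (hbpos _) (hbnorm _), hγ]

theorem stmt_4 {V E : Type} [Fintype V] [DecidableEq V] [Fintype E] [DecidableEq E]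
    -- a finite simple graph, with edge endpoints `ep1 e`, `ep2 e`
    (ep1 ep2 : E → V)
    (hloop : ∀ e, ep1 e ≠ ep2 e)
    (hsimple : ∀ e e',
      (ep1 e = ep1 e' ∧ ep2 e = ep2 e') ∨ (ep1 e = ep2 e' ∧ ep2 e = ep1 e') → e = e')
    -- beliefs (spins: `true ↔ +1`, `false ↔ -1`)
    (b : V → Bool → ℝ) (hbpos : ∀ i x, 0 < b i x)
    (hbnorm : ∀ i, b i true + b i false = 1)
    (bE : E → Bool → Bool → ℝ)
    (hmarg1 : ∀ e x1, ∑ x2 : Bool, bE e x1 x2 = b (ep1 e) x1)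
    (hmarg2 : ∀ e x2, ∑ x1 : Bool, bE e x1 x2 = b (ep2 e) x2)
    -- the quantities `γ_i` and `β_ij`
    (γ : V → ℝ)
    (hγ : ∀ i, γ i = (b i true - b i false) / Real.sqrt (b i true * b i false))
    (β : E → ℝ)
    (hβ : ∀ e, β e =
      (bE e true true * bE e false false - bE e true false * bE e false true) /
        (Real.sqrt (b (ep1 e) true * b (ep1 e) false) *
          Real.sqrt (b (ep2 e) true * b (ep2 e) false))) :
    ∑ x : V → Bool,
      (∏ e : E, bE e (x (ep1 e)) (x (ep2 e)) /
          (b (ep1 e) (x (ep1 e)) * b (ep2 e) (x (ep2 e)))) *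
        ∏ i : V, b i (x i)
    = ∑ s : Finset E, (∏ e ∈ s, β e) * ∏ i : V, chebF (deg ep1 ep2 i s) (γ i) :=
  stmt_4_general ep1 ep2 hloop b hbpos hbnorm bE hmarg1 hmarg2 γ hγ β hβ
end

section
/- Fix a distinguished node 1 ∈ V. With beliefs as in the context, Σ_{x : V → {±1}} x_1 ∏_{ij∈E} ( b_ij(x_i,x_j) / (b_i(x_i) b_j(x_j)) ) ∏_{i∈V} b_i(x_i) = √(b_1(1) b_1(−1)) · Σ_{s ⊆ E} ∏_{ij∈s} β_ij ∏_{i∈V∖{1}} f_{d_i(s)}(γ_i) · g_{d_1(s)}(γ_1). (This is the loop series expansion of the marginal: the left-hand side equals (Z/Z_B)(p_1(+1) − p_1(−1)) for the true marginal p_1.) -/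
/-- The polynomials `g_n` defined by `g_0(x) = x`, `g_1(x) = -2`,
`g_{n+1}(x) = x g_n(x) + g_{n-1}(x)`. -/
def chebG : ℕ → ℝ → ℝ
  | 0, x => x
  | 1, _ => -2
  | n + 2, x => x * chebG (n + 1) x + chebG n x

/-!
Each edge factor `b_ij(x_i, x_j) / (b_i(x_i) b_j(x_j))` equals `1 + β_ij u_i(x_i) u_j(x_j)`, where
`u_i` is minus the standardised spin at `i`; this uses only the marginal conditions. Expanding the
product over edges gives a sum over edge subsets `s`, and for fixed `s` the sum over configurations
factorises over the vertices into the moments `∑_y b_i(y) u_i(y)^d` and `∑_y y b_1(y) u_1(y)^d`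
with `d = d_i(s)`. Both values of `u_i` are roots of `t² = γ_i t + 1`, so these moments satisfy the
recurrence of `f` and `g`; their initial values identify them with `f_d(γ_i)` and
`√(b_1(1) b_1(-1)) g_d(γ_1)`.
-/

open Finset

section Recurrence

variable {x r s α β : ℝ}

lemma pow_add_two_of_sq_eq (hr : r ^ 2 = x * r + 1) (n : ℕ) :
    r ^ (n + 2) = x * r ^ (n + 1) + r ^ n := by
  linear_combination r ^ n * hr

theorem chebF_eq_of_sq_eq (hr : r ^ 2 = x * r + 1) (hs : s ^ 2 = x * s + 1)
    (h₀ : α + β = 1) (h₁ : α * r + β * s = 0) : ∀ n, α * r ^ n + β * s ^ n = chebF n x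
  | 0 => by simpa [chebF] using h₀
  | 1 => by simpa [chebF] using h₁
  | n + 2 => by
    rw [chebF, ← chebF_eq_of_sq_eq hr hs h₀ h₁ (n + 1), ← chebF_eq_of_sq_eq hr hs h₀ h₁ n,
      pow_add_two_of_sq_eq hr, pow_add_two_of_sq_eq hs]
    ring

theorem chebG_eq_of_sq_eq (hr : r ^ 2 = x * r + 1) (hs : s ^ 2 = x * s + 1)
    (h₀ : α + β = x) (h₁ : α * r + β * s = -2) : ∀ n, α * r ^ n + β * s ^ n = chebG n x
  | 0 => by simpa [chebG] using h₀
  | 1 => by simpa [chebG] using h₁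
  | n + 2 => by
    rw [chebG, ← chebG_eq_of_sq_eq hr hs h₀ h₁ (n + 1), ← chebG_eq_of_sq_eq hr hs h₀ h₁ n,
      pow_add_two_of_sq_eq hr, pow_add_two_of_sq_eq hs]
    ring

end Recurrence

/-- `u(x) = -(x - m) / σ` for the spin `x` with law `p`, mean `m = p(1) - p(-1)` and standard
deviation `σ = 2 √(p(1) p(-1))`. -/
noncomputable def loopWeight (p : Bool → ℝ) : Bool → ℝ
  | true => -p false / √(p true * p false)
  | false => p true / √(p true * p false)

section Moments

variable {p : Bool → ℝ}

lemma sq_sqrt_mul_bool (hp : ∀ y, 0 < p y) : √(p true * p false) ^ 2 = p true * p false :=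
  Real.sq_sqrt (mul_pos (hp true) (hp false)).le

lemma sqrt_mul_bool_ne_zero (hp : ∀ y, 0 < p y) : √(p true * p false) ≠ 0 :=
  (Real.sqrt_pos.2 (mul_pos (hp true) (hp false))).ne'

lemma loopWeight_sq (hp : ∀ y, 0 < p y) (y : Bool) :
    loopWeight p y ^ 2 = (p true - p false) / √(p true * p false) * loopWeight p y + 1 := by
  have hc := sqrt_mul_bool_ne_zero hp
  have hc2 := sq_sqrt_mul_bool hp
  cases y <;> simp only [loopWeight] <;> set c := √(p true * p false) <;> field_simp <;>
    linear_combination -hc2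

lemma loopWeight_div_sqrt (hp : ∀ y, 0 < p y) (y : Bool) :
    loopWeight p y / √(p true * p false) = -sgn y / p y := by
  have hc := sqrt_mul_bool_ne_zero hp
  have hc2 := sq_sqrt_mul_bool hp
  have := hp true; have := hp false
  cases y <;> simp only [loopWeight, sgn] <;> set c := √(p true * p false) <;> field_simp <;>
    push_cast
  · linear_combination -hc2
  · linear_combination hc2

theorem sum_mul_loopWeight_pow (hp : ∀ y, 0 < p y) (hnorm : p true + p false = 1) (n : ℕ) :
    ∑ y, p y * loopWeight p y ^ n = chebF n ((p true - p false) / √(p true * p false)) := by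
  have hc := sqrt_mul_bool_ne_zero hp
  rw [Fintype.sum_bool]
  refine chebF_eq_of_sq_eq (loopWeight_sq hp true) (loopWeight_sq hp false) hnorm ?_ n
  simp only [loopWeight]
  field_simp
  ring

theorem sum_sgn_mul_loopWeight_pow (hp : ∀ y, 0 < p y) (n : ℕ) :
    ∑ y, (sgn y : ℝ) * (p y * loopWeight p y ^ n) =
      √(p true * p false) * chebG n ((p true - p false) / √(p true * p false)) := by
  have hc := sqrt_mul_bool_ne_zero hp
  have hc2 := sq_sqrt_mul_bool hp
  rw [Fintype.sum_bool, ← chebG_eq_of_sq_eq (α := p true / √(p true * p false))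
    (β := -p false / √(p true * p false)) (loopWeight_sq hp true) (loopWeight_sq hp false)]
  · simp only [sgn]; push_cast; field_simp
  · ring
  · simp only [loopWeight]
    set c := √(p true * p false)
    field_simp
    linear_combination 2 * hc2

end Moments

section EdgeFactor

variable {t : Bool → Bool → ℝ} {p q : Bool → ℝ}

lemma eq_det_mul_sgn_add_mul_of_marginals (hp : ∀ x, ∑ y, t x y = p x)
    (hq : ∀ y, ∑ x, t x y = q y) (hnorm : p true + p false = 1) (x y : Bool) :
    t x y = (t true true * t false false - t true false * t false true) * (sgn x * sgn y) +
      p x * q y := by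
  simp only [Fintype.sum_bool] at hp hq
  rw [← hp, ← hp] at hnorm
  rw [← hp, ← hq]
  cases x <;> cases y <;> simp only [sgn] <;> push_cast
  · linear_combination (-t false false) * hnorm
  · linear_combination (-t false true) * hnorm
  · linear_combination (-t true false) * hnorm
  · linear_combination (-t true true) * hnorm

lemma div_mul_eq_one_add_mul_loopWeight (hp₀ : ∀ x, 0 < p x) (hq₀ : ∀ y, 0 < q y)
    (hp : ∀ x, ∑ y, t x y = p x) (hq : ∀ y, ∑ x, t x y = q y) (hnorm : p true + p false = 1)
    (x y : Bool) :
    t x y / (p x * q y) = 1 +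
      (t true true * t false false - t true false * t false true) /
          (√(p true * p false) * √(q true * q false)) *
        (loopWeight p x * loopWeight q y) := by
  have := hp₀ x; have := hq₀ y
  rw [eq_det_mul_sgn_add_mul_of_marginals hp hq hnorm x y,
    div_mul_eq_mul_div, mul_div_assoc, mul_div_mul_comm, loopWeight_div_sqrt hq₀,
    loopWeight_div_sqrt hp₀]
  field_simp
  ring

end EdgeFactor

section Expansion

variable {V E : Type} {α R : Type*} [Fintype V] [DecidableEq V] [DecidableEq E] [Fintype α]
  [CommSemiring R]

lemma prod_mul_endpoints_eq_prod_pow_deg {M : Type*} [CommMonoid M] {ep1 ep2 : E → V}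
    (hloop : ∀ e, ep1 e ≠ ep2 e) (w : V → M) (s : Finset E) :
    ∏ e ∈ s, w (ep1 e) * w (ep2 e) = ∏ i, w i ^ deg ep1 ep2 i s := by
  have hpair : ∀ e, w (ep1 e) * w (ep2 e) = ∏ i, if ep1 e = i ∨ ep2 e = i then w i else 1 := by
    intro e
    rw [← prod_filter, ← prod_pair (hloop e)]
    congr
    ext i
    simp [eq_comm]
  rw [prod_congr rfl fun e _ => hpair e, prod_comm]
  refine prod_congr rfl fun i _ => ?_
  rw [← prod_filter, prod_const, deg]

lemma sum_pi_mul_prod_eq_prod_erase_mul (v : V) (g : α → R) (h : V → α → R) :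
    ∑ x : V → α, g (x v) * ∏ i, h i (x i) =
      (∏ i ∈ univ.erase v, ∑ y, h i y) * ∑ y, g y * h v y := by
  set h' : V → α → R := fun i y => if i = v then g y * h i y else h i y
  have h'_of_ne : ∀ i ∈ univ.erase v, h' i = h i := fun i hi => by
    funext y; exact if_neg (ne_of_mem_erase hi)
  calc ∑ x : V → α, g (x v) * ∏ i, h i (x i) = ∑ x : V → α, ∏ i, h' i (x i) := by
        refine sum_congr rfl fun x _ => ?_
        rw [← mul_prod_erase univ (fun i => h' i (x i)) (mem_univ v),
          ← mul_prod_erase univ (fun i => h i (x i)) (mem_univ v), ← mul_assoc,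
          prod_congr rfl fun i hi => congrFun (h'_of_ne i hi) (x i)]
        simp only [h', if_pos]
    _ = ∏ i, ∑ y, h' i y := (Fintype.prod_sum h').symm
    _ = _ := by
        rw [← mul_prod_erase univ _ (mem_univ v), mul_comm,
          prod_congr rfl fun i hi => congrArg (fun f => ∑ y, f y) (h'_of_ne i hi)]
        simp only [h', if_pos]

theorem sum_mul_prod_one_add_mul_prod_eq [Fintype E] {ep1 ep2 : E → V}
    (hloop : ∀ e, ep1 e ≠ ep2 e) (v : V) (g : α → R) (β : E → R) (u w : V → α → R) :
    ∑ x : V → α, g (x v) * (∏ e, (1 + β e * (u (ep1 e) (x (ep1 e)) * u (ep2 e) (x (ep2 e))))) *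
        ∏ i, w i (x i) =
      ∑ s : Finset E, (∏ e ∈ s, β e) *
        (∏ i ∈ univ.erase v, ∑ y, w i y * u i y ^ deg ep1 ep2 i s) *
          ∑ y, g y * (w v y * u v y ^ deg ep1 ep2 v s) := by
  have expand : ∀ x : V → α,
      ∏ e, (1 + β e * (u (ep1 e) (x (ep1 e)) * u (ep2 e) (x (ep2 e)))) =
        ∑ s : Finset E, (∏ e ∈ s, β e) * ∏ i, u i (x i) ^ deg ep1 ep2 i s := fun x => by
    rw [prod_one_add, powerset_univ]
    exact sum_congr rfl fun s _ => by
      rw [prod_mul_distrib, prod_mul_endpoints_eq_prod_pow_deg hloop fun i => u i (x i)]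
  calc _ = ∑ x : V → α, ∑ s : Finset E, (∏ e ∈ s, β e) *
          (g (x v) * ∏ i, w i (x i) * u i (x i) ^ deg ep1 ep2 i s) := by
        refine sum_congr rfl fun x _ => ?_
        rw [expand, mul_sum, sum_mul]
        exact sum_congr rfl fun s _ => by rw [prod_mul_distrib]; ring
    _ = _ := by
        rw [sum_comm]
        refine sum_congr rfl fun s _ => ?_
        rw [← mul_sum, mul_assoc,
          sum_pi_mul_prod_eq_prod_erase_mul v g fun i y => w i y * u i y ^ deg ep1 ep2 i s]

end Expansion

theorem stmt_6_general {V E : Type} [Fintype V] [DecidableEq V] [Fintype E] [DecidableEq E]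
    -- a finite simple graph, with edge endpoints `ep1 e`, `ep2 e`
    (ep1 ep2 : E → V)
    (hloop : ∀ e, ep1 e ≠ ep2 e)
    -- the distinguished node `1 ∈ V`
    (v1 : V)
    -- beliefs (spins: `true ↔ +1`, `false ↔ -1`)
    (b : V → Bool → ℝ) (hbpos : ∀ i x, 0 < b i x)
    (hbnorm : ∀ i, b i true + b i false = 1)
    (bE : E → Bool → Bool → ℝ)
    (hmarg1 : ∀ e x1, ∑ x2 : Bool, bE e x1 x2 = b (ep1 e) x1)
    (hmarg2 : ∀ e x2, ∑ x1 : Bool, bE e x1 x2 = b (ep2 e) x2)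
    -- the quantities `γ_i` and `β_ij`
    (γ : V → ℝ)
    (hγ : ∀ i, γ i = (b i true - b i false) / Real.sqrt (b i true * b i false))
    (β : E → ℝ)
    (hβ : ∀ e, β e =
      (bE e true true * bE e false false - bE e true false * bE e false true) /
        (Real.sqrt (b (ep1 e) true * b (ep1 e) false) *
          Real.sqrt (b (ep2 e) true * b (ep2 e) false))) :
    ∑ x : V → Bool, (sgn (x v1) : ℝ) *
      (∏ e : E, bE e (x (ep1 e)) (x (ep2 e)) /
          (b (ep1 e) (x (ep1 e)) * b (ep2 e) (x (ep2 e)))) *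
        ∏ i : V, b i (x i)
    = Real.sqrt (b v1 true * b v1 false) *
        ∑ s : Finset E, (∏ e ∈ s, β e) *
          (∏ i ∈ Finset.univ.erase v1, chebF (deg ep1 ep2 i s) (γ i)) *
          chebG (deg ep1 ep2 v1 s) (γ v1) := by
  have edge_factor : ∀ e x y, bE e x y / (b (ep1 e) x * b (ep2 e) y) =
      1 + β e * (loopWeight (b (ep1 e)) x * loopWeight (b (ep2 e)) y) := fun e x y => by
    rw [hβ e]
    exact div_mul_eq_one_add_mul_loopWeight (hbpos _) (hbpos _) (hmarg1 e) (hmarg2 e)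
      (hbnorm _) x y
  simp_rw [edge_factor]
  rw [sum_mul_prod_one_add_mul_prod_eq hloop v1 (fun y => (sgn y : ℝ)) β
    (fun i => loopWeight (b i)) b, mul_sum]
  refine sum_congr rfl fun s _ => ?_
  simp only [sum_sgn_mul_loopWeight_pow (hbpos _), sum_mul_loopWeight_pow (hbpos _) (hbnorm _),
    ← hγ]
  ring

theorem stmt_6 {V E : Type} [Fintype V] [DecidableEq V] [Fintype E] [DecidableEq E]
    -- a finite simple graph, with edge endpoints `ep1 e`, `ep2 e`
    (ep1 ep2 : E → V)
    (hloop : ∀ e, ep1 e ≠ ep2 e)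
    (hsimple : ∀ e e',
      (ep1 e = ep1 e' ∧ ep2 e = ep2 e') ∨ (ep1 e = ep2 e' ∧ ep2 e = ep1 e') → e = e')
    -- the distinguished node `1 ∈ V`
    (v1 : V)
    -- beliefs (spins: `true ↔ +1`, `false ↔ -1`)
    (b : V → Bool → ℝ) (hbpos : ∀ i x, 0 < b i x)
    (hbnorm : ∀ i, b i true + b i false = 1)
    (bE : E → Bool → Bool → ℝ)
    (hmarg1 : ∀ e x1, ∑ x2 : Bool, bE e x1 x2 = b (ep1 e) x1)
    (hmarg2 : ∀ e x2, ∑ x1 : Bool, bE e x1 x2 = b (ep2 e) x2)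
    -- the quantities `γ_i` and `β_ij`
    (γ : V → ℝ)
    (hγ : ∀ i, γ i = (b i true - b i false) / Real.sqrt (b i true * b i false))
    (β : E → ℝ)
    (hβ : ∀ e, β e =
      (bE e true true * bE e false false - bE e true false * bE e false true) /
        (Real.sqrt (b (ep1 e) true * b (ep1 e) false) *
          Real.sqrt (b (ep2 e) true * b (ep2 e) false))) :
    ∑ x : V → Bool, (sgn (x v1) : ℝ) *
      (∏ e : E, bE e (x (ep1 e)) (x (ep2 e)) /
          (b (ep1 e) (x (ep1 e)) * b (ep2 e) (x (ep2 e)))) *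
        ∏ i : V, b i (x i)
    = Real.sqrt (b v1 true * b v1 false) *
        ∑ s : Finset E, (∏ e ∈ s, β e) *
          (∏ i ∈ Finset.univ.erase v1, chebF (deg ep1 ep2 i s) (γ i)) *
          chebG (deg ep1 ep2 v1 s) (γ v1) :=
  stmt_6_general ep1 ep2 hloop v1 b hbpos hbnorm bE hmarg1 hmarg2 γ hγ β hβ
end

section
/- Suppose G is a finite connected simple graph with |E| = |V| (so G has exactly one cycle) and the distinguished node 1 lies on the unique cycle. Let {γ_i}_{i∈V} be arbitrary reals and {β_ij}_{ij∈E} reals with |β_ij| ≤ 1 for all ij ∈ E. Then γ_1 · ( Σ_{s ⊆ E} ∏_{ij∈s} β_ij ∏_{i∈V∖{1}} f_{d_i(s)}(γ_i) · g_{d_1(s)}(γ_1) ) ≥ 0; that is, the marginal-expansion sum has the same (weak) sign as γ_1, so the maximum-belief assignment at node 1 agrees with the maximum true marginal assignment for single-cycle graphs. -/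
/-!
Over `𝔽₂`, the edge sets all of whose degrees are even are the kernel of the incidence matrix
`M : 𝔽₂^E → 𝔽₂^V`. For a connected graph `ker Mᵀ` consists of constants, so `rank M ≥ |V| - 1`
and, as `|E| = |V|`, there is at most one nonempty even edge set, the cycle `C`. Running the same
rank count on the columns of an edge set `s` gives `|s| ≤ |V(s)|`, with a nonempty even subset of
`s` as soon as `|V(s)| ≤ |s|`.

A term of the sum vanishes when some node `i ≠ 1` has degree one, since `f_1 = 0`. If `s ≠ ∅` has
no such node, counting degrees gives `|V(s)| ≤ |s|`, so `s` contains an even subset, which passes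
through node `1`; then every node of `V(s)` has degree at least two, and `|s| ≤ |V(s)|` forces
degree exactly two. Hence only `∅` and `C` contribute, and since `f_2 = 1`, `g_2(x) = -x` the
expression is `γ₁² (1 - ∏_{e ∈ C} β_e) ≥ 0`.
-/

open Finset Matrix Module

theorem Matrix.rank_le_card_sub_one_of_one_vecMul_eq_zero {m n R : Type*} [Fintype m]
    [Fintype n] [DecidableEq m] [Field R] (A : Matrix m n R) (W : Finset m) (hW : ∀ i ∉ W, A.row i = 0) (hsum : 1 ᵥ* A = 0)
    {w : m} (hw : w ∈ W) : A.rank ≤ #W - 1 := by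
  have hrows : ∑ i, A.row i = 0 := funext fun j => by
    simpa [vecMul, dotProduct] using congrFun hsum j
  set S := Submodule.span R (Set.range fun i : W.erase w => A.row i)
  have hmem : ∀ i ∈ W.erase w, A.row i ∈ S := fun i hi => Submodule.subset_span ⟨⟨i, hi⟩, rfl⟩
  have hrow : ∀ i, A.row i ∈ S := by
    intro i
    by_cases hiW : i ∈ W
    · by_cases hiw : i = w
      · subst hiw
        have : A.row i = -∑ j ∈ W.erase i, A.row j := by
          rw [eq_neg_iff_add_eq_zero, add_sum_erase W A.row hiW, ← hrows]
          exact sum_subset (subset_univ W) fun j _ hj => hW j hj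
        rw [this]
        exact S.neg_mem (S.sum_mem hmem)
      · exact hmem i (mem_erase.mpr ⟨hiw, hiW⟩)
    · rw [hW i hiW]
      exact S.zero_mem
  calc A.rank = finrank R (Submodule.span R (Set.range A.row)) := A.rank_eq_finrank_span_row
    _ ≤ finrank R S :=
      Submodule.finrank_mono (Submodule.span_le.mpr (Set.range_subset_iff.mpr hrow))
    _ ≤ Fintype.card (W.erase w) := finrank_range_le_card _
    _ = #W - 1 := by rw [Fintype.card_coe, card_erase_of_mem hw]

theorem eq_of_ne_zero_of_finrank_le_one {M : Type*} [AddCommGroup M] [Module (ZMod 2) M]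
    [Module.Finite (ZMod 2) M] (h : finrank (ZMod 2) M ≤ 1) {x y : M} (hx : x ≠ 0)
    (hy : y ≠ 0) : x = y := by
  obtain ⟨v, hv⟩ := finrank_le_one_iff.mp h
  have hone : ∀ c : ZMod 2, c • v ≠ 0 → c • v = v := fun c hc => by
    fin_cases c
    exacts [absurd (zero_smul _ v) hc, one_smul _ v]
  obtain ⟨a, rfl⟩ := hv x
  obtain ⟨b, rfl⟩ := hv y
  rw [hone a hx, hone b hy]

theorem indicator_filter_ne_zero {E : Type*} [Fintype E] (y : E → ZMod 2) :
    (({e | y e ≠ 0} : Finset E) : Set E).indicator 1 = y := by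
  ext e
  have h01 : ∀ a : ZMod 2, a = 0 ∨ a = 1 := by decide
  rcases h01 (y e) with h | h <;> simp [h]

theorem SimpleGraph.Preconnected.apply_eq {V α : Type*} {G : SimpleGraph V} (hG : G.Preconnected)
    {y : V → α} (hy : ∀ a b, G.Adj a b → y a = y b) (a b : V) : y a = y b := by
  obtain ⟨p⟩ := hG a b
  induction p with
  | nil => rfl
  | cons hadj _ ih => exact (hy _ _ hadj).trans ih

theorem Finset.prod_le_one_of_abs_le_one {ι : Type*} (s : Finset ι) {f : ι → ℝ}
    (h : ∀ i ∈ s, |f i| ≤ 1) : ∏ i ∈ s, f i ≤ 1 :=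
  (le_abs_self _).trans <| (abs_prod s f).trans_le (prod_le_one (fun _ _ => abs_nonneg _) h)

section Incidence

variable {V E : Type} [DecidableEq V]

variable (ep1 ep2 : E → V) in
def incidence : Matrix V E (ZMod 2) := of fun i e => if ep1 e = i ∨ ep2 e = i then 1 else 0

variable {ep1 ep2 : E → V}

theorem incidence_mulVec_indicator [Fintype E] [DecidableEq E] (s : Finset E) :
    incidence ep1 ep2 *ᵥ (s : Set E).indicator 1 = fun i => (deg ep1 ep2 i s : ZMod 2) := by
  ext i
  simp only [incidence, mulVec, dotProduct, of_apply, Set.indicator_apply, mem_coe, Pi.one_apply,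
    mul_ite, mul_one, mul_zero, sum_ite_mem, univ_inter, sum_boole, deg]

theorem indicator_mem_ker_incidence_iff [Fintype E] [DecidableEq E] (s : Finset E) :
    (s : Set E).indicator 1 ∈ LinearMap.ker (incidence ep1 ep2).mulVecLin ↔
      ∀ i, Even (deg ep1 ep2 i s) := by
  simp [incidence_mulVec_indicator, funext_iff, ZMod.natCast_eq_zero_iff_even]

theorem vecMul_incidence [Fintype V] (hloop : ∀ e, ep1 e ≠ ep2 e) (y : V → ZMod 2) (e : E) :
    (y ᵥ* incidence ep1 ep2) e = y (ep1 e) + y (ep2 e) := by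
  have hsplit : ∀ i, (if ep1 e = i ∨ ep2 e = i then (1 : ZMod 2) else 0) =
      (if ep1 e = i then 1 else 0) + (if ep2 e = i then 1 else 0) := by
    intro i
    by_cases h1 : ep1 e = i <;> by_cases h2 : ep2 e = i
    · exact absurd (h1.trans h2.symm) (hloop e)
    all_goals simp [h1, h2]
  simp [incidence, vecMul, dotProduct, hsplit, mul_add, sum_add_distrib]

theorem finrank_ker_incidence_le_one [Fintype V] [Fintype E] (hloop : ∀ e, ep1 e ≠ ep2 e)
    (hconn : (SimpleGraph.fromRel fun a b => ∃ e, ep1 e = a ∧ ep2 e = b).Connected)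
    (hcard : Fintype.card E = Fintype.card V) :
    finrank (ZMod 2) (LinearMap.ker (incidence ep1 ep2).mulVecLin) ≤ 1 := by
  obtain ⟨v⟩ := hconn.nonempty
  have hker : LinearMap.ker (incidence ep1 ep2)ᵀ.mulVecLin ≤ Submodule.span (ZMod 2) {1} := by
    intro y hyker
    have hy : ∀ e, y (ep1 e) = y (ep2 e) := fun e => by
      simpa [vecMul_incidence hloop, CharTwo.add_eq_zero] using congrFun hyker e
    have hconst := hconn.preconnected.apply_eq (y := y) fun a b hab => by
      obtain ⟨-, ⟨e, rfl, rfl⟩ | ⟨e, rfl, rfl⟩⟩ := (SimpleGraph.fromRel_adj _ _ _).mp hab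
      exacts [hy e, (hy e).symm]
    exact Submodule.mem_span_singleton.mpr ⟨y v, funext fun i => by simp [hconst i v]⟩
  have hnullity : finrank (ZMod 2) (LinearMap.ker (incidence ep1 ep2)ᵀ.mulVecLin) ≤ 1 :=
    (Submodule.finrank_mono hker).trans ((finrank_span_le_card _).trans (by simp))
  have hrankT := LinearMap.finrank_range_add_finrank_ker (incidence ep1 ep2)ᵀ.mulVecLin
  have hrank := LinearMap.finrank_range_add_finrank_ker (incidence ep1 ep2).mulVecLin
  have htranspose := rank_transpose (incidence ep1 ep2)
  simp only [rank, Module.finrank_fintype_fun_eq_card] at hrankT hrank htranspose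
  omega

theorem eq_of_forall_even_deg [Fintype V] [Fintype E] [DecidableEq E]
    (hloop : ∀ e, ep1 e ≠ ep2 e)
    (hconn : (SimpleGraph.fromRel fun a b => ∃ e, ep1 e = a ∧ ep2 e = b).Connected)
    (hcard : Fintype.card E = Fintype.card V) {s t : Finset E} (hs : s.Nonempty)
    (ht : t.Nonempty) (hs_even : ∀ i, Even (deg ep1 ep2 i s))
    (ht_even : ∀ i, Even (deg ep1 ep2 i t)) : s = t := by
  have hne : ∀ u : Finset E, u.Nonempty → (u : Set E).indicator (1 : E → ZMod 2) ≠ 0 := by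
    rintro u ⟨e, he⟩ h
    simpa [he] using congrFun h e
  have := eq_of_ne_zero_of_finrank_le_one (finrank_ker_incidence_le_one hloop hconn hcard)
    (x := ⟨_, (indicator_mem_ker_incidence_iff s).mpr hs_even⟩)
    (y := ⟨_, (indicator_mem_ker_incidence_iff t).mpr ht_even⟩)
    (by simpa using hne s hs) (by simpa using hne t ht)
  exact_mod_cast Set.indicator_one_inj (ZMod 2) (congrArg Subtype.val this)

theorem rank_incidence_submatrix_le [Fintype V] [DecidableEq E] (hloop : ∀ e, ep1 e ≠ ep2 e)
    (s : Finset E) {w : V} (hw : deg ep1 ep2 w s ≠ 0) :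
    ((incidence ep1 ep2).submatrix id ((↑) : s → E)).rank ≤ #{i | deg ep1 ep2 i s ≠ 0} - 1 := by
  refine rank_le_card_sub_one_of_one_vecMul_eq_zero _ _ (fun i hi => ?_) ?_
    (mem_filter.mpr ⟨mem_univ w, hw⟩)
  · have hs : ∀ e ∈ s, ¬(ep1 e = i ∨ ep2 e = i) := by
      simpa [deg, filter_eq_empty_iff] using hi
    ext ⟨e, he⟩
    simp [incidence, hs e he]
  · ext ⟨e, -⟩
    simpa [vecMul, dotProduct, CharTwo.add_self_eq_zero] using vecMul_incidence hloop 1 e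

theorem incidence_mulVec_extend [Fintype E] (s : Finset E) (x : s → ZMod 2) :
    incidence ep1 ep2 *ᵥ Function.extend (↑) x 0 =
      (incidence ep1 ep2).submatrix id ((↑) : s → E) *ᵥ x := by
  ext i
  simp only [mulVec, dotProduct]
  rw [← sum_subset (subset_univ s) fun e _ he => by rw [Function.extend_val_apply' he]; simp,
    ← sum_coe_sort s]
  simp

theorem finrank_ker_incidence_submatrix_le [Fintype E] (s : Finset E) :
    finrank (ZMod 2) (LinearMap.ker ((incidence ep1 ep2).submatrix id ((↑) : s → E)).mulVecLin) ≤
      finrank (ZMod 2) (LinearMap.ker (incidence ep1 ep2).mulVecLin) := by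
  have hmaps : ∀ x ∈ LinearMap.ker ((incidence ep1 ep2).submatrix id ((↑) : s → E)).mulVecLin,
      Function.ExtendByZero.linearMap (ZMod 2) ((↑) : s → E) x ∈
        LinearMap.ker (incidence ep1 ep2).mulVecLin :=
    fun x hx => (incidence_mulVec_extend s x).trans hx
  refine LinearMap.finrank_le_finrank_of_injective (f := LinearMap.restrict _ hmaps)
    fun x y hxy => Subtype.ext ?_
  exact Function.extend_injective Subtype.val_injective (0 : E → ZMod 2) (congrArg Subtype.val hxy)

theorem exists_even_subset_of_finrank_ker_pos [Fintype E] [DecidableEq E] (s : Finset E)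
    (h : 0 < finrank (ZMod 2)
      (LinearMap.ker ((incidence ep1 ep2).submatrix id ((↑) : s → E)).mulVecLin)) :
    ∃ t ⊆ s, t.Nonempty ∧ ∀ i, Even (deg ep1 ep2 i t) := by
  have hne : LinearMap.ker ((incidence ep1 ep2).submatrix id ((↑) : s → E)).mulVecLin ≠ ⊥ :=
    fun hbot => by rw [hbot, finrank_bot] at h; exact h.false
  obtain ⟨x, hx, hx0⟩ := Submodule.exists_mem_ne_zero_of_ne_bot hne
  obtain ⟨a, ha⟩ := Function.ne_iff.mp hx0
  set y := Function.extend ((↑) : s → E) x 0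
  have hy : y ∈ LinearMap.ker (incidence ep1 ep2).mulVecLin := by
    rw [LinearMap.mem_ker, mulVecLin_apply, incidence_mulVec_extend]
    exact hx
  refine ⟨({e | y e ≠ 0} : Finset E), fun e he => ?_, ⟨a, ?_⟩, ?_⟩
  · by_contra hes
    exact (mem_filter.mp he).2 (Function.extend_val_apply' hes)
  · simpa [y, Function.extend_val_apply a.2] using ha
  · rwa [← indicator_mem_ker_incidence_iff, indicator_filter_ne_zero]

theorem card_lt_card_support_deg_add_finrank_ker [Fintype V] [DecidableEq E]
    (hloop : ∀ e, ep1 e ≠ ep2 e) {s : Finset E} (hs : s.Nonempty) :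
    #s < #{i | deg ep1 ep2 i s ≠ 0} + finrank (ZMod 2)
      (LinearMap.ker ((incidence ep1 ep2).submatrix id ((↑) : s → E)).mulVecLin) := by
  obtain ⟨e, he⟩ := hs
  have hw : deg ep1 ep2 (ep1 e) s ≠ 0 :=
    (card_pos.mpr ⟨e, mem_filter.mpr ⟨he, Or.inl rfl⟩⟩).ne'
  have hW : 0 < #{i | deg ep1 ep2 i s ≠ 0} :=
    card_pos.mpr ⟨ep1 e, mem_filter.mpr ⟨mem_univ _, hw⟩⟩
  have hrank := rank_incidence_submatrix_le hloop s hw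
  have hnullity := LinearMap.finrank_range_add_finrank_ker
    ((incidence ep1 ep2).submatrix id ((↑) : s → E)).mulVecLin
  rw [finrank_fintype_fun_eq_card, Fintype.card_coe] at hnullity
  rw [rank] at hrank
  omega

end Incidence

section Degrees

variable {V E : Type} [DecidableEq V] [DecidableEq E] {ep1 ep2 : E → V}

theorem sum_deg [Fintype V] (hloop : ∀ e, ep1 e ≠ ep2 e) (s : Finset E) :
    ∑ i, deg ep1 ep2 i s = 2 * #s := by
  have hpair : ∀ e, #({i | ep1 e = i ∨ ep2 e = i} : Finset V) = 2 := fun e => by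
    rw [show ({i | ep1 e = i ∨ ep2 e = i} : Finset V) = {ep1 e, ep2 e} by ext; simp [eq_comm]]
    exact card_pair (hloop e)
  simp only [deg, card_filter]
  rw [sum_comm]
  simp only [← card_filter, hpair, sum_const, smul_eq_mul, mul_comm]

theorem deg_mono (i : V) {s t : Finset E} (h : t ⊆ s) : deg ep1 ep2 i t ≤ deg ep1 ep2 i s :=
  card_le_card (filter_subset_filter _ h)

theorem card_support_deg_le_of_deg_ne_one [Fintype V] (hloop : ∀ e, ep1 e ≠ ep2 e) {v1 : V}
    {s : Finset E} (hdeg : ∀ i ≠ v1, deg ep1 ep2 i s ≠ 1) :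
    #{i | deg ep1 ep2 i s ≠ 0} ≤ #s := by
  have h : ∑ i ∈ {i | deg ep1 ep2 i s ≠ 0}, 2 ≤
      ∑ i ∈ {i | deg ep1 ep2 i s ≠ 0}, (deg ep1 ep2 i s + if v1 = i then 1 else 0) :=
    sum_le_sum fun i hi => by
      have := (mem_filter.mp hi).2
      split_ifs with h
      · omega
      · have := hdeg i (Ne.symm h)
        omega
  rw [sum_add_distrib, sum_ite_eq, sum_filter_ne_zero, sum_deg hloop, sum_const, smul_eq_mul] at h
  split_ifs at h <;> omega

variable [Fintype V] [Fintype E]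

theorem card_le_card_support_deg (hloop : ∀ e, ep1 e ≠ ep2 e)
    (hconn : (SimpleGraph.fromRel fun a b => ∃ e, ep1 e = a ∧ ep2 e = b).Connected)
    (hcard : Fintype.card E = Fintype.card V) {s : Finset E} (hs : s.Nonempty) :
    #s ≤ #{i | deg ep1 ep2 i s ≠ 0} := by
  have := card_lt_card_support_deg_add_finrank_ker hloop hs
  have := (finrank_ker_incidence_submatrix_le s).trans
    (finrank_ker_incidence_le_one hloop hconn hcard)
  omega

theorem exists_even_subset_of_card_support_deg_le (hloop : ∀ e, ep1 e ≠ ep2 e) {s : Finset E}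
    (hs : s.Nonempty) (h : #{i | deg ep1 ep2 i s ≠ 0} ≤ #s) :
    ∃ t ⊆ s, t.Nonempty ∧ ∀ i, Even (deg ep1 ep2 i t) := by
  have := card_lt_card_support_deg_add_finrank_ker hloop hs
  exact exists_even_subset_of_finrank_ker_pos s (by omega)

variable (ep1 ep2) in
def genLoopsExcept (v1 : V) : Finset (Finset E) :=
  ({s | ∀ i ≠ v1, deg ep1 ep2 i s ≠ 1} : Finset (Finset E)).erase ∅

theorem deg_eq_zero_or_two (hloop : ∀ e, ep1 e ≠ ep2 e)
    (hconn : (SimpleGraph.fromRel fun a b => ∃ e, ep1 e = a ∧ ep2 e = b).Connected)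
    (hcard : Fintype.card E = Fintype.card V) {v1 : V}
    (hv1 : ∀ C : Finset E, C.Nonempty → (∀ i : V, deg ep1 ep2 i C ≠ 1) →
      0 < deg ep1 ep2 v1 C)
    {s : Finset E} (hs : s ∈ genLoopsExcept ep1 ep2 v1) :
    (∀ i, deg ep1 ep2 i s = 0 ∨ deg ep1 ep2 i s = 2) ∧ deg ep1 ep2 v1 s = 2 := by
  obtain ⟨hs, hdeg⟩ := mem_erase.mp hs
  replace hs := nonempty_iff_ne_empty.mpr hs
  replace hdeg := (mem_filter.mp hdeg).2
  have hle := card_le_card_support_deg hloop hconn hcard hs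
  obtain ⟨t, hts, ht, ht_even⟩ := exists_even_subset_of_card_support_deg_le hloop hs
    (card_support_deg_le_of_deg_ne_one hloop hdeg)
  have hv1t : 2 ≤ deg ep1 ep2 v1 s := by
    have hpos := hv1 t ht fun i h1 => by simpa [h1] using ht_even i
    obtain ⟨k, hk⟩ := ht_even v1
    have := deg_mono v1 hts (ep1 := ep1) (ep2 := ep2)
    omega
  set W : Finset V := {i | deg ep1 ep2 i s ≠ 0}
  have htwo : ∀ i ∈ W, 2 ≤ deg ep1 ep2 i s := fun i hi => by
    by_cases h : i = v1
    · exact h ▸ hv1t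
    · have := (mem_filter.mp hi).2
      have := hdeg i h
      omega
  have heq : ∀ i ∈ W, deg ep1 ep2 i s = 2 := by
    refine fun i hi => ((sum_eq_sum_iff_of_le htwo).mp (le_antisymm (sum_le_sum htwo) ?_) i hi).symm
    rw [sum_filter_ne_zero, sum_deg hloop, sum_const, smul_eq_mul]
    omega
  refine ⟨fun i => ?_, heq v1 (mem_filter.mpr ⟨mem_univ _, by omega⟩)⟩
  by_cases hi : deg ep1 ep2 i s = 0
  exacts [Or.inl hi, Or.inr (heq i (mem_filter.mpr ⟨mem_univ _, hi⟩))]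

theorem card_genLoopsExcept_le_one (hloop : ∀ e, ep1 e ≠ ep2 e)
    (hconn : (SimpleGraph.fromRel fun a b => ∃ e, ep1 e = a ∧ ep2 e = b).Connected)
    (hcard : Fintype.card E = Fintype.card V) {v1 : V}
    (hv1 : ∀ C : Finset E, C.Nonempty → (∀ i : V, deg ep1 ep2 i C ≠ 1) →
      0 < deg ep1 ep2 v1 C) :
    #(genLoopsExcept ep1 ep2 v1) ≤ 1 := by
  have heven : ∀ s ∈ genLoopsExcept ep1 ep2 v1, ∀ i, Even (deg ep1 ep2 i s) := fun s hs i =>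
    ((deg_eq_zero_or_two hloop hconn hcard hv1 hs).1 i).elim (fun h => by rw [h]; decide)
      (fun h => by rw [h]; decide)
  have hne : ∀ s ∈ genLoopsExcept ep1 ep2 v1, s.Nonempty := fun s hs =>
    nonempty_iff_ne_empty.mpr (ne_of_mem_erase hs)
  exact card_le_one.mpr fun s hs t ht => eq_of_forall_even_deg hloop hconn hcard (hne s hs)
    (hne t ht) (heven s hs) (heven t ht)

end Degrees

theorem chebF_two (x : ℝ) : chebF 2 x = 1 := by
  simp [chebF]

theorem chebG_two (x : ℝ) : chebG 2 x = -x := by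
  rw [chebG, chebG, chebG]
  ring

section LoopTerm

variable {V E : Type} [Fintype V] [DecidableEq V] [DecidableEq E] {ep1 ep2 : E → V}
  {v1 : V} {γ : V → ℝ} {β : E → ℝ}

variable (ep1 ep2 v1 γ β) in
def loopTerm (s : Finset E) : ℝ :=
  (∏ e ∈ s, β e) * (∏ i ∈ univ.erase v1, chebF (deg ep1 ep2 i s) (γ i)) *
    chebG (deg ep1 ep2 v1 s) (γ v1)

theorem loopTerm_eq_neg {s : Finset E} (h : ∀ i, deg ep1 ep2 i s = 0 ∨ deg ep1 ep2 i s = 2)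
    (hv1 : deg ep1 ep2 v1 s = 2) : loopTerm ep1 ep2 v1 γ β s = -(∏ e ∈ s, β e) * γ v1 := by
  have hF : ∀ i ∈ univ.erase v1, chebF (deg ep1 ep2 i s) (γ i) = 1 := fun i _ => by
    rcases h i with h | h <;> rw [h]
    exacts [rfl, chebF_two _]
  rw [loopTerm, prod_eq_one hF, hv1, chebG_two]
  ring

theorem sum_loopTerm [Fintype E]
    (hcycle : ∀ s ∈ genLoopsExcept ep1 ep2 v1,
      (∀ i, deg ep1 ep2 i s = 0 ∨ deg ep1 ep2 i s = 2) ∧ deg ep1 ep2 v1 s = 2) :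
    ∑ s, loopTerm ep1 ep2 v1 γ β s =
      γ v1 - (∑ s ∈ genLoopsExcept ep1 ep2 v1, ∏ e ∈ s, β e) * γ v1 := by
  have hvanish : ∀ s, loopTerm ep1 ep2 v1 γ β s ≠ 0 → ∀ i ≠ v1, deg ep1 ep2 i s ≠ 1 :=
    fun s h i hi h1 => h (by rw [loopTerm, prod_eq_zero (mem_erase.mpr ⟨hi, mem_univ i⟩)
      (by rw [h1, chebF]), mul_zero, zero_mul])
  have hempty : loopTerm ep1 ep2 v1 γ β ∅ = γ v1 := by
    simp [loopTerm, deg, chebF, chebG]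
  rw [← sum_filter_of_ne fun s _ => hvanish s,
    ← add_sum_erase _ _ (mem_filter.mpr ⟨mem_univ (∅ : Finset E), by simp [deg]⟩), hempty, sum_mul,
    sub_eq_add_neg, ← sum_neg_distrib]
  exact congrArg _ (sum_congr rfl fun s hs => by
    rw [loopTerm_eq_neg (hcycle s hs).1 (hcycle s hs).2, neg_mul])

end LoopTerm

theorem stmt_7_general {V E : Type} [Fintype V] [DecidableEq V] [Fintype E] [DecidableEq E]
    -- a finite connected simple graph with `|E| = |V|` (exactly one cycle)
    (ep1 ep2 : E → V)
    (hloop : ∀ e, ep1 e ≠ ep2 e)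
    (hconn : (SimpleGraph.fromRel fun a b => ∃ e, ep1 e = a ∧ ep2 e = b).Connected)
    (hcard : Fintype.card E = Fintype.card V)
    -- the distinguished node `1` lies on the unique cycle: it is covered by
    -- every nonempty generalized loop
    (v1 : V)
    (hv1 : ∀ C : Finset E, C.Nonempty → (∀ i : V, deg ep1 ep2 i C ≠ 1) →
      0 < deg ep1 ep2 v1 C)
    (γ : V → ℝ) (β : E → ℝ) (hβ : ∀ e, |β e| ≤ 1) :
    0 ≤ γ v1 *
      ∑ s : Finset E, (∏ e ∈ s, β e) *
        (∏ i ∈ Finset.univ.erase v1, chebF (deg ep1 ep2 i s) (γ i)) *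
        chebG (deg ep1 ep2 v1 s) (γ v1) := by
  change 0 ≤ γ v1 * ∑ s, loopTerm ep1 ep2 v1 γ β s
  rw [sum_loopTerm fun s hs => deg_eq_zero_or_two hloop hconn hcard hv1 hs]
  have hβ_sum : ∑ s ∈ genLoopsExcept ep1 ep2 v1, ∏ e ∈ s, β e ≤ 1 :=
    calc ∑ s ∈ genLoopsExcept ep1 ep2 v1, ∏ e ∈ s, β e ≤ #(genLoopsExcept ep1 ep2 v1) := by
          simpa using sum_le_card_nsmul _ _ 1 fun s _ => prod_le_one_of_abs_le_one s fun e _ => hβ e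
      _ ≤ 1 := mod_cast card_genLoopsExcept_le_one hloop hconn hcard hv1
  rw [show ∀ a b : ℝ, a * (a - b * a) = a * a * (1 - b) by intros; ring]
  exact mul_nonneg (mul_self_nonneg _) (sub_nonneg.mpr hβ_sum)

theorem stmt_7 {V E : Type} [Fintype V] [DecidableEq V] [Fintype E] [DecidableEq E]
    -- a finite connected simple graph with `|E| = |V|` (exactly one cycle)
    (ep1 ep2 : E → V)
    (hloop : ∀ e, ep1 e ≠ ep2 e)
    (hsimple : ∀ e e',
      (ep1 e = ep1 e' ∧ ep2 e = ep2 e') ∨ (ep1 e = ep2 e' ∧ ep2 e = ep1 e') → e = e')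
    (hconn : (SimpleGraph.fromRel fun a b => ∃ e, ep1 e = a ∧ ep2 e = b).Connected)
    (hcard : Fintype.card E = Fintype.card V)
    -- the distinguished node `1` lies on the unique cycle: it is covered by
    -- every nonempty generalized loop
    (v1 : V)
    (hv1 : ∀ C : Finset E, C.Nonempty → (∀ i : V, deg ep1 ep2 i C ≠ 1) →
      0 < deg ep1 ep2 v1 C)
    (γ : V → ℝ) (β : E → ℝ) (hβ : ∀ e, |β e| ≤ 1) :
    0 ≤ γ v1 *
      ∑ s : Finset E, (∏ e ∈ s, β e) *
        (∏ i ∈ Finset.univ.erase v1, chebF (deg ep1 ep2 i s) (γ i)) *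
        chebG (deg ep1 ep2 v1 s) (γ v1) :=
  stmt_7_general ep1 ep2 hloop hconn hcard v1 hv1 γ β hβ
end

section
/- Let G = (V,E) be a finite connected simple graph and n(G) := |E| − |V| + 1. Then for every real ξ > 0, θ_G(1,ξ) = Σ_{k=0}^{n(G)} C(n(G), k) f_{2k}(ξ − ξ⁻¹), where C(n,k) is the binomial coefficient. -/
/-- The graph polynomial `θ_G(β,ξ) = Σ_{s ⊆ E} β^{|s|} Π_{i∈V} f_{d_i(s)}(ξ - ξ⁻¹)`. -/
noncomputable def theta {V E : Type} [Fintype V] [DecidableEq V] [Fintype E] [DecidableEq E]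
    (ep1 ep2 : E → V) (β ξ : ℝ) : ℝ :=
  ∑ s : Finset E, β ^ s.card * ∏ i : V, chebF (deg ep1 ep2 i s) (ξ - ξ⁻¹)

/-! Write `f_n(ξ - ξ⁻¹) = a ξⁿ + b (-ξ⁻¹)ⁿ`, with `a + b = f_0 = 1` and `a ξ - b ξ⁻¹ = f_1 = 0`.
Expanding `∏ᵢ f_{dᵢ(s)}` assigns to every vertex one of the two roots, and summing over the edge
sets `s` turns `θ_G(1, ξ)` into a sum over such assignments `σ` of `∏ₑ (1 + σ(u) σ(v))`.
Because `ξ · (-ξ⁻¹) = -1`, an edge whose ends carry different roots kills its term, so by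
connectivity only the two constant assignments survive:
`θ_G(1, ξ) = a^|V| (1 + ξ²)^|E| + b^|V| (1 + ξ⁻²)^|E|`. By the binomial theorem the right-hand side
is `a (1 + ξ²)^n + b (1 + ξ⁻²)^n`, and the two agree since `a (1 + ξ²) = b (1 + ξ⁻²) = 1`. -/

lemma chebF_add_of_mul_eq_neg_one_s8 {x y a b : ℝ} (hxy : x * y = -1) (h0 : a + b = 1)
    (h1 : a * x + b * y = 0) (n : ℕ) : chebF n (x + y) = a * x ^ n + b * y ^ n := by
  induction n using Nat.twoStepInduction with
  | zero => simpa [chebF] using h0.symm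
  | one => simpa [chebF] using h1.symm
  | more n ih₀ ih₁ =>
    rw [chebF, ih₀, ih₁]
    linear_combination (a * x ^ n + b * y ^ n) * hxy

lemma chebF_sub_inv {ξ : ℝ} (hξ : ξ ≠ 0) (n : ℕ) :
    chebF n (ξ - ξ⁻¹) = (1 + ξ ^ 2)⁻¹ * ξ ^ n + (1 + (-ξ⁻¹) ^ 2)⁻¹ * (-ξ⁻¹) ^ n := by
  rw [sub_eq_add_neg]
  refine chebF_add_of_mul_eq_neg_one_s8 (by rw [mul_neg, mul_inv_cancel₀ hξ]) ?_ ?_ n <;>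
    field_simp <;> ring

lemma sum_range_choose_mul_apply_two_mul {R : Type*} [CommSemiring R] (g : ℕ → R) {a b x y : R}
    (hg : ∀ n, g n = a * x ^ n + b * y ^ n) (n : ℕ) :
    ∑ k ∈ Finset.range (n + 1), (n.choose k : R) * g (2 * k) =
      a * (1 + x ^ 2) ^ n + b * (1 + y ^ 2) ^ n := by
  simp only [hg, add_comm (1 : R), add_pow, one_pow, mul_one, Finset.mul_sum,
    ← Finset.sum_add_distrib, pow_mul]
  exact Finset.sum_congr rfl fun k _ => by ring

lemma pow_succ_mul_pow_add {M : Type*} [CommMonoid M] {a t : M} (h : a * t = 1) (n k : ℕ) :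
    a ^ (k + 1) * t ^ (n + k) = a * t ^ n := by
  rw [pow_succ', pow_add, ← mul_one (a * t ^ n), ← one_pow k, ← h, mul_pow]
  ac_rfl

section Graph

variable {V E : Type} {ep1 ep2 : E → V}

lemma prod_pow_deg {M : Type*} [CommMonoid M] [Fintype V] [DecidableEq V] [DecidableEq E]
    (hloop : ∀ e, ep1 e ≠ ep2 e) (x : V → M) (s : Finset E) :
    ∏ i, x i ^ deg ep1 ep2 i s = ∏ e ∈ s, x (ep1 e) * x (ep2 e) := by
  calc ∏ i, x i ^ deg ep1 ep2 i s
      = ∏ i, ∏ e ∈ s with ep1 e = i ∨ ep2 e = i, x i := by simp [deg]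
    _ = ∏ e ∈ s, ∏ i ∈ {ep1 e, ep2 e}, x i := by
      rw [Finset.prod_comm' (t' := s) (s' := fun e => {ep1 e, ep2 e})]
      intro i e; simp [eq_comm, and_comm]
    _ = ∏ e ∈ s, x (ep1 e) * x (ep2 e) := by
      simp [Finset.prod_pair (hloop _)]

lemma sum_prod_deg_eq_sum_coloring {R ι : Type*} [CommSemiring R] [Fintype ι] [Fintype V]
    [DecidableEq V] [Fintype E] [DecidableEq E]
    (hloop : ∀ e, ep1 e ≠ ep2 e) (g : ℕ → R) (c z : ι → R)
    (hg : ∀ n, g n = ∑ j, c j * z j ^ n) :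
    ∑ s : Finset E, ∏ i, g (deg ep1 ep2 i s) =
      ∑ σ : V → ι, (∏ i, c (σ i)) * ∏ e, (1 + z (σ (ep1 e)) * z (σ (ep2 e))) := by
  calc ∑ s : Finset E, ∏ i, g (deg ep1 ep2 i s)
      = ∑ s : Finset E, ∑ σ : V → ι, ∏ i, c (σ i) * z (σ i) ^ deg ep1 ep2 i s := by
        simp only [hg, Fintype.prod_sum]
    _ = ∑ σ : V → ι, (∏ i, c (σ i)) *
          ∑ s : Finset E, ∏ e ∈ s, z (σ (ep1 e)) * z (σ (ep2 e)) := by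
        rw [Finset.sum_comm]
        simp only [Finset.prod_mul_distrib, prod_pow_deg hloop, Finset.mul_sum]
    _ = _ := by simp only [Finset.prod_one_add, Finset.powerset_univ]

lemma apply_eq_of_connected {α : Type*}
    (hconn : (SimpleGraph.fromRel fun a b => ∃ e, ep1 e = a ∧ ep2 e = b).Connected)
    (σ : V → α) (hσ : ∀ e, σ (ep1 e) = σ (ep2 e)) (i j : V) : σ i = σ j := by
  have hadj : (SimpleGraph.fromRel fun a b => ∃ e, ep1 e = a ∧ ep2 e = b).Adj ≤
      fun a b => σ a = σ b := by
    rintro a b ⟨-, ⟨e, rfl, rfl⟩ | ⟨e, rfl, rfl⟩⟩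
    exacts [hσ e, (hσ e).symm]
  simpa [Relation.reflTransGen_eq_self] using Relation.ReflTransGen.lift σ hadj _ _
    ((SimpleGraph.reachable_iff_reflTransGen _ _).1 (hconn.preconnected i j))

lemma card_le_card_add_one_of_connected [Fintype V] [Fintype E] (hloop : ∀ e, ep1 e ≠ ep2 e)
    (hconn : (SimpleGraph.fromRel fun a b => ∃ e, ep1 e = a ∧ ep2 e = b).Connected) :
    Fintype.card V ≤ Fintype.card E + 1 := by
  let edge : E → (SimpleGraph.fromRel fun a b => ∃ e, ep1 e = a ∧ ep2 e = b).edgeSet :=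
    fun e => ⟨s(ep1 e, ep2 e), by simpa using ⟨hloop e, Or.inl ⟨e, rfl, rfl⟩⟩⟩
  have hedge : Function.Surjective edge := by
    rintro ⟨⟨a, b⟩, hab⟩
    obtain ⟨-, ⟨e, rfl, rfl⟩ | ⟨e, rfl, rfl⟩⟩ := (SimpleGraph.mem_edgeSet _).1 hab
    exacts [⟨e, rfl⟩, ⟨e, Subtype.ext Sym2.eq_swap⟩]
  simpa only [Nat.card_eq_fintype_card] using
    hconn.card_vert_le_card_edgeSet_add_one.trans
      (Nat.add_le_add_right (Nat.card_le_card_of_surjective edge hedge) 1)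

lemma sum_prod_deg_eq_of_mul_eq_neg_one {R : Type*} [CommRing R] [Fintype V] [DecidableEq V]
    [Fintype E] [DecidableEq E]
    (hloop : ∀ e, ep1 e ≠ ep2 e)
    (hconn : (SimpleGraph.fromRel fun a b => ∃ e, ep1 e = a ∧ ep2 e = b).Connected)
    {g : ℕ → R} {a b x y : R} (hxy : x * y = -1) (hg : ∀ n, g n = a * x ^ n + b * y ^ n) :
    ∑ s : Finset E, ∏ i, g (deg ep1 ep2 i s) =
      a ^ Fintype.card V * (1 + x ^ 2) ^ Fintype.card E +
        b ^ Fintype.card V * (1 + y ^ 2) ^ Fintype.card E := by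
  have hV : Nonempty V := hconn.nonempty
  rw [sum_prod_deg_eq_sum_coloring hloop g (fun j => cond j a b) (fun j => cond j x y)
    (by simp [hg])]
  rw [Fintype.sum_eq_add (fun _ => true) (fun _ => false) (by simp [funext_iff])]
  · simp [sq]
  rintro σ ⟨hσt, hσf⟩
  obtain ⟨e, he⟩ : ∃ e, σ (ep1 e) ≠ σ (ep2 e) := by
    by_contra! hσ
    obtain ⟨i⟩ := hV
    have hconst : σ = fun _ => σ i := funext fun j => apply_eq_of_connected hconn σ hσ j i
    cases hi : σ i <;> rw [hi] at hconst <;> contradiction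
  have hvanish : 1 + cond (σ (ep1 e)) x y * cond (σ (ep2 e)) x y = 0 := by
    revert he; cases σ (ep1 e) <;> cases σ (ep2 e) <;> simp [hxy, mul_comm y x]
  rw [Finset.prod_eq_zero (Finset.mem_univ e) hvanish, mul_zero]

end Graph

theorem stmt_8_general {V E : Type} [Fintype V] [DecidableEq V] [Fintype E] [DecidableEq E]
    -- a finite connected simple graph
    (ep1 ep2 : E → V)
    (hloop : ∀ e, ep1 e ≠ ep2 e)
    (hconn : (SimpleGraph.fromRel fun a b => ∃ e, ep1 e = a ∧ ep2 e = b).Connected)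
    (ξ : ℝ) (hξ : 0 < ξ) :
    -- `n(G) = |E| - |V| + 1`, here computed as `|E| + 1 - |V|` in ℕ
    theta ep1 ep2 1 ξ =
      ∑ k ∈ Finset.range (Fintype.card E + 1 - Fintype.card V + 1),
        (((Fintype.card E + 1 - Fintype.card V).choose k : ℝ)) *
          chebF (2 * k) (ξ - ξ⁻¹) := by
  have hcheb := chebF_sub_inv hξ.ne'
  obtain ⟨k, hk⟩ : ∃ k, Fintype.card V = k + 1 :=
    Nat.exists_eq_add_one.2 (@Fintype.card_pos _ _ hconn.nonempty)
  obtain ⟨n, hn⟩ : ∃ n, Fintype.card E = n + k := ⟨Fintype.card E - k, by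
    have := card_le_card_add_one_of_connected hloop hconn; omega⟩
  have hn' : Fintype.card E + 1 - Fintype.card V = n := by omega
  simp only [theta, one_pow, one_mul]
  rw [sum_prod_deg_eq_of_mul_eq_neg_one hloop hconn (by field_simp) hcheb, hn', hk, hn,
    pow_succ_mul_pow_add (inv_mul_cancel₀ (by positivity)),
    pow_succ_mul_pow_add (inv_mul_cancel₀ (by positivity)),
    sum_range_choose_mul_apply_two_mul _ hcheb]

theorem stmt_8 {V E : Type} [Fintype V] [DecidableEq V] [Fintype E] [DecidableEq E]
    -- a finite connected simple graph
    (ep1 ep2 : E → V)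
    (hloop : ∀ e, ep1 e ≠ ep2 e)
    (hsimple : ∀ e e',
      (ep1 e = ep1 e' ∧ ep2 e = ep2 e') ∨ (ep1 e = ep2 e' ∧ ep2 e = ep1 e') → e = e')
    (hconn : (SimpleGraph.fromRel fun a b => ∃ e, ep1 e = a ∧ ep2 e = b).Connected)
    (ξ : ℝ) (hξ : 0 < ξ) :
    -- `n(G) = |E| - |V| + 1`, here computed as `|E| + 1 - |V|` in ℕ
    theta ep1 ep2 1 ξ =
      ∑ k ∈ Finset.range (Fintype.card E + 1 - Fintype.card V + 1),
        (((Fintype.card E + 1 - Fintype.card V).choose k : ℝ)) *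
          chebF (2 * k) (ξ - ξ⁻¹) :=
  stmt_8_general ep1 ep2 hloop hconn ξ hξ
end

section
/- Let G be a finite multigraph and e an edge of G whose two endpoints u, v are distinct (a non-loop edge). Let G∖e be the multigraph obtained by deleting e (same vertices, edge set E∖{e}), and G/e the multigraph obtained by contracting e (vertex set the quotient of V identifying u and v, edge set E∖{e} with incidence composed with the quotient map). Then for all real β and all real ξ > 0, θ_G(β,ξ) = (1 − β) θ_{G∖e}(β,ξ) + β θ_{G/e}(β,ξ). -/
/-- `degM ep1 ep2 i s` is the degree of the node `i` in the multigraph edge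
subset `s`; a loop at `i` counts twice. -/
def degM {V E : Type} [DecidableEq V] [DecidableEq E] (ep1 ep2 : E → V) (i : V)
    (s : Finset E) : ℕ :=
  (s.filter fun e => ep1 e = i).card + (s.filter fun e => ep2 e = i).card

/-- The multigraph polynomial
`θ_G(β,ξ) = Σ_{s ⊆ E} β^{|s|} Π_{i∈V} f_{d_i(s)}(ξ - ξ⁻¹)`. -/
noncomputable def thetaM {V E : Type} [Fintype V] [DecidableEq V] [Fintype E] [DecidableEq E]
    (ep1 ep2 : E → V) (β ξ : ℝ) : ℝ :=
  ∑ s : Finset E, β ^ s.card * ∏ i : V, chebF (degM ep1 ep2 i s) (ξ - ξ⁻¹)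

/-! Split the subsets `s ⊆ E` according to whether they contain `e0 = uv`. A subset without `e0`
contributes exactly its summand in `θ_{G∖e0}`. Adding `e0` multiplies by `β` and raises the degrees
`a, b` of `u, v` by one; by the addition formula `f_{a+b} = f_a f_b + f_{a+1} f_{b+1}` the two
summands together equal `(1 - β)` times the `G∖e0` summand plus `β` times the `G/e0` summand, in
which `u` and `v` have merged into one vertex of degree `a + b`. -/

open Finset

lemma chebF_succ_succ (n : ℕ) (x : ℝ) : chebF (n + 2) x = x * chebF (n + 1) x + chebF n x := rfl

lemma chebF_add (x : ℝ) (a b : ℕ) :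
    chebF (a + b) x = chebF a x * chebF b x + chebF (a + 1) x * chebF (b + 1) x := by
  induction a generalizing b with
  | zero => simp [chebF]
  | succ a ih =>
    rw [show a + 1 + b = a + (b + 1) by omega, ih, chebF_succ_succ, chebF_succ_succ]
    ring

section splitAtEdge

variable {E M : Type} [Fintype E] [DecidableEq E] [AddCommMonoid M]

lemma sum_map_subtype_ne_eq_sum_powerset_erase (e0 : E) (F : Finset E → M) :
    ∑ t : Finset {e : E // e ≠ e0}, F (t.map (Function.Embedding.subtype _))
      = ∑ s ∈ (univ.erase e0).powerset, F s := by
  refine sum_nbij' (·.map (Function.Embedding.subtype _)) (·.subtype (· ≠ e0))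
    ?_ ?_ ?_ ?_ ?_
  · intro t _
    simpa [subset_iff] using fun _ h _ => h
  · simp
  · intro t _
    ext e
    simpa using fun _ => e.2
  · intro s hs
    exact subtype_map_of_mem (by simpa [subset_iff] using hs)
  · simp

lemma sum_finset_eq_sum_subtype_ne_add_insert (e0 : E) (F : Finset E → M) :
    ∑ s, F s = ∑ t : Finset {e : E // e ≠ e0},
      (F (t.map (Function.Embedding.subtype _))
        + F (insert e0 (t.map (Function.Embedding.subtype _)))) := by
  rw [sum_add_distrib, sum_map_subtype_ne_eq_sum_powerset_erase,
    sum_map_subtype_ne_eq_sum_powerset_erase e0 (fun s => F (insert e0 s)),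
    ← sum_powerset_insert (notMem_erase e0 univ), insert_erase (mem_univ e0), powerset_univ]

end splitAtEdge

section degM

variable {V W E : Type} [DecidableEq V] [DecidableEq W] [DecidableEq E]

lemma degM_map {E' : Type} [DecidableEq E'] (ep1 ep2 : E → V) (f : E' ↪ E) (i : V)
    (t : Finset E') :
    degM ep1 ep2 i (t.map f) = degM (ep1 ∘ f) (ep2 ∘ f) i t := by
  simp [degM, filter_map]

lemma degM_insert (ep1 ep2 : E → V) (i : V) {e : E} {s : Finset E} (he : e ∉ s) :
    degM ep1 ep2 i (insert e s)
      = degM ep1 ep2 i s + ((if ep1 e = i then 1 else 0) + (if ep2 e = i then 1 else 0)) := by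
  unfold degM
  rw [filter_insert, filter_insert]
  split_ifs <;> simp [card_insert_of_notMem, he] <;> omega

lemma degM_comp [Fintype V] (q : V → W) (ep1 ep2 : E → V) (j : W) (s : Finset E) :
    degM (q ∘ ep1) (q ∘ ep2) j s = ∑ i with q i = j, degM ep1 ep2 i s := by
  have fiberwise (ep : E → V) :
      #{e ∈ s | q (ep e) = j} = ∑ i with q i = j, #{e ∈ s | ep e = i} := by
    rw [card_eq_sum_card_fiberwise (f := ep) (t := {i | q i = j}) (by intro e; simp)]
    refine sum_congr rfl fun i hi => ?_
    rw [filter_filter]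
    refine congrArg card (filter_congr fun e _ => ?_)
    simp only [mem_filter, mem_univ, true_and] at hi
    constructor
    · exact And.right
    · intro h; exact ⟨h ▸ hi, h⟩
  simp only [degM, sum_add_distrib, Function.comp_apply, fiberwise]

end degM

section contraction

variable {V E : Type} [DecidableEq V] [DecidableEq E] {u v : V}

def contractVertex (h : u ≠ v) (w : V) : {w : V // w ≠ v} :=
  if hw : w = v then ⟨u, h⟩ else ⟨w, hw⟩

lemma filter_contractVertex_eq [Fintype V] (h : u ≠ v) (i : {w : V // w ≠ v}) :
    ({w | contractVertex h w = i} : Finset V) = if i.1 = u then {u, v} else {i.1} := by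
  ext w
  unfold contractVertex
  split_ifs <;> simp [Subtype.ext_iff] <;> grind

lemma degM_contractVertex [Fintype V] (h : u ≠ v) (ep1 ep2 : E → V) (i : {w : V // w ≠ v})
    (s : Finset E) :
    degM (contractVertex h ∘ ep1) (contractVertex h ∘ ep2) i s
      = if i.1 = u then degM ep1 ep2 u s + degM ep1 ep2 v s else degM ep1 ep2 i.1 s := by
  rw [degM_comp, filter_contractVertex_eq]
  split_ifs
  · exact sum_pair h
  · exact sum_singleton _ _

end contraction

section products

variable {V M : Type} [Fintype V] [DecidableEq V] [CommMonoid M] {u v : V}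

lemma prod_univ_eq_mul_mul_prod_erase_erase (h : u ≠ v) (g : V → M) :
    ∏ i, g i = g u * g v * ∏ i ∈ (univ.erase u).erase v, g i := by
  rw [mul_assoc, mul_prod_erase _ _ (mem_erase.2 ⟨h.symm, mem_univ v⟩),
    mul_prod_erase _ _ (mem_univ u)]

lemma prod_subtype_ne_eq_mul_prod_erase_erase (h : u ≠ v) (g : V → M) :
    ∏ i : {w : V // w ≠ v}, g i = g u * ∏ i ∈ (univ.erase u).erase v, g i := by
  rw [← prod_subtype (univ.erase v) (by simp) g,
    ← mul_prod_erase _ _ (mem_erase.2 ⟨h, mem_univ u⟩), erase_right_comm]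

end products

noncomputable def thetaSummand {V E : Type} [Fintype V] [DecidableEq V] [DecidableEq E]
    (ep1 ep2 : E → V) (β x : ℝ) (s : Finset E) : ℝ :=
  β ^ s.card * ∏ i : V, chebF (degM ep1 ep2 i s) x

lemma thetaSummand_add_thetaSummand_insert {V E : Type} [Fintype V] [DecidableEq V]
    [DecidableEq E] (ep1 ep2 : E → V) {e0 : E} (h0 : ep1 e0 ≠ ep2 e0) (β x : ℝ)
    (t : Finset {e : E // e ≠ e0}) :
    thetaSummand ep1 ep2 β x (t.map (Function.Embedding.subtype _))
      + thetaSummand ep1 ep2 β x (insert e0 (t.map (Function.Embedding.subtype _)))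
    = (1 - β) * thetaSummand (fun e : {e : E // e ≠ e0} => ep1 e) (fun e => ep2 e) β x t
      + β * thetaSummand (fun e : {e : E // e ≠ e0} => contractVertex h0 (ep1 e))
          (fun e => contractVertex h0 (ep2 e)) β x t := by
  set u := ep1 e0
  set v := ep2 e0
  set sub : {e : E // e ≠ e0} ↪ E := Function.Embedding.subtype _
  let d i := degM (fun e : {e : E // e ≠ e0} => ep1 e) (fun e => ep2 e) i t
  have he0 : e0 ∉ t.map sub := notMem_map_subtype_of_not_property t (not_not.2 rfl)
  have hdel (i : V) : degM ep1 ep2 i (t.map sub) = d i := degM_map ep1 ep2 sub i t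
  have hins (i : V) : degM ep1 ep2 i (insert e0 (t.map sub))
      = d i + ((if u = i then 1 else 0) + (if v = i then 1 else 0)) := by
    rw [degM_insert _ _ _ he0, hdel]
  have hcon (i : {w : V // w ≠ v}) :
      degM (fun e : {e : E // e ≠ e0} => contractVertex h0 (ep1 e))
        (fun e => contractVertex h0 (ep2 e)) i t = if i.1 = u then d u + d v else d i :=
    degM_contractVertex h0 _ _ i t
  unfold thetaSummand
  simp only [hdel, hins, hcon, card_insert_of_notMem he0, card_map]
  rw [prod_univ_eq_mul_mul_prod_erase_erase h0, prod_univ_eq_mul_mul_prod_erase_erase h0,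
    prod_subtype_ne_eq_mul_prod_erase_erase h0
      (fun w => chebF (if w = u then d u + d v else d w) x)]
  set P := ∏ i ∈ (univ.erase u).erase v, chebF (d i) x
  have hP_ins : ∏ i ∈ (univ.erase u).erase v,
      chebF (d i + ((if u = i then 1 else 0) + (if v = i then 1 else 0))) x = P := by
    refine prod_congr rfl fun i hi => ?_
    rw [if_neg (ne_of_mem_erase (mem_of_mem_erase hi)).symm, if_neg (ne_of_mem_erase hi).symm,
      add_zero, add_zero]
  have hP_con : ∏ i ∈ (univ.erase u).erase v, chebF (if i = u then d u + d v else d i) x = P :=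
    prod_congr rfl fun i hi => by rw [if_neg (ne_of_mem_erase (mem_of_mem_erase hi))]
  simp only [hP_ins, hP_con, if_pos, if_neg h0, if_neg h0.symm, add_zero, zero_add]
  rw [chebF_add x (d u) (d v), pow_succ]
  ring

theorem stmt_13_general {V E : Type} [Fintype V] [DecidableEq V] [Fintype E] [DecidableEq E]
    -- a finite multigraph with edge endpoints `ep1 e`, `ep2 e`
    (ep1 ep2 : E → V)
    -- a non-loop edge `e0`
    (e0 : E) (h0 : ep1 e0 ≠ ep2 e0)
    (β ξ : ℝ) :
    thetaM ep1 ep2 β ξ =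
      -- deletion `G ∖ e0`: same vertices, edges `E ∖ {e0}`
      (1 - β) * thetaM (fun e : {e : E // e ≠ e0} => ep1 e.1) (fun e => ep2 e.1) β ξ
      -- contraction `G / e0`: the endpoint `ep2 e0` is identified with `ep1 e0`
      + β * thetaM (V := {w : V // w ≠ ep2 e0})
          (fun e : {e : E // e ≠ e0} =>
            if h : ep1 e.1 = ep2 e0 then ⟨ep1 e0, h0⟩ else ⟨ep1 e.1, h⟩)
          (fun e : {e : E // e ≠ e0} =>
            if h : ep2 e.1 = ep2 e0 then ⟨ep1 e0, h0⟩ else ⟨ep2 e.1, h⟩) β ξ := by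
  change ∑ s, thetaSummand ep1 ep2 β (ξ - ξ⁻¹) s = _
  rw [sum_finset_eq_sum_subtype_ne_add_insert e0, thetaM, thetaM, mul_sum, mul_sum,
    ← sum_add_distrib]
  -- the contracted endpoint maps of the statement are `contractVertex h0 ∘ ep_k` unfolded
  exact sum_congr rfl fun t _ => thetaSummand_add_thetaSummand_insert ep1 ep2 h0 β _ t

theorem stmt_13 {V E : Type} [Fintype V] [DecidableEq V] [Fintype E] [DecidableEq E]
    -- a finite multigraph with edge endpoints `ep1 e`, `ep2 e`
    (ep1 ep2 : E → V)
    -- a non-loop edge `e0`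
    (e0 : E) (h0 : ep1 e0 ≠ ep2 e0)
    (β ξ : ℝ) (hξ : 0 < ξ) :
    thetaM ep1 ep2 β ξ =
      -- deletion `G ∖ e0`: same vertices, edges `E ∖ {e0}`
      (1 - β) * thetaM (fun e : {e : E // e ≠ e0} => ep1 e.1) (fun e => ep2 e.1) β ξ
      -- contraction `G / e0`: the endpoint `ep2 e0` is identified with `ep1 e0`
      + β * thetaM (V := {w : V // w ≠ ep2 e0})
          (fun e : {e : E // e ≠ e0} =>
            if h : ep1 e.1 = ep2 e0 then ⟨ep1 e0, h0⟩ else ⟨ep1 e.1, h⟩)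
          (fun e : {e : E // e ≠ e0} =>
            if h : ep2 e.1 = ep2 e0 then ⟨ep1 e0, h0⟩ else ⟨ep2 e.1, h⟩) β ξ :=
  stmt_13_general ep1 ep2 e0 h0 β ξ
end

section
/- Let B_L be the bouquet multigraph with a single vertex and L ≥ 1 loop edges. Then for all complex β, θ_{B_L}(β, √−1) = (1 − β)^{L−1} (1 + (2L − 1) β); equivalently ω_{B_L}(β) = 1 + (2L−1)β. -/
/-- The polynomials `f_n` over ℂ defined by `f_0 = 1`, `f_1 = 0`,
`f_{n+1}(x) = x f_n(x) + f_{n-1}(x)`. -/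
def chebFC : ℕ → ℂ → ℂ
  | 0, _ => 1
  | 1, _ => 0
  | n + 2, x => x * chebFC (n + 1) x + chebFC n x

/-- The multigraph polynomial `θ_G(β, ξ)` evaluated at `ξ = √-1`:
`θ_G(β, √-1) = Σ_{s ⊆ E} β^{|s|} Π_{i∈V} f_{d_i(s)}(√-1 - (√-1)⁻¹)`. -/
noncomputable def thetaMI {V E : Type} [Fintype V] [DecidableEq V] [Fintype E] [DecidableEq E]
    (ep1 ep2 : E → V) (β : ℂ) : ℂ :=
  ∑ s : Finset E, β ^ s.card *
    ∏ i : V, chebFC (degM ep1 ep2 i s) (Complex.I - Complex.I⁻¹)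

/-!
Every vertex degree in a bouquet is even, and `f_{2k}(2√-1) = (-1)ᵏ (1 - 2k)`, so
`θ = Σ_s (-β)^|s| (1 - 2|s|)`. The binomial theorem gives `Σ_s x^|s| = (1 + x)^L` and, after
differentiating, `Σ_s |s| x^|s| = L x (1 + x)^(L-1)`; take `x = -β`.
-/

open Finset

/-- `2√-1` is where `t² = x t + 1` has the double root `t = √-1`, so `f_n(2√-1) = (a + b n) (√-1)ⁿ`. -/
theorem chebFC_two_mul_I (n : ℕ) : chebFC n (2 * Complex.I) = Complex.I ^ n * (1 - n) := by
  induction n using Nat.twoStepInduction with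
  | zero => simp [chebFC]
  | one => simp [chebFC]
  | more n ih₀ ih₁ =>
    rw [chebFC, ih₀, ih₁]
    push_cast
    linear_combination Complex.I ^ n * (1 - n) * Complex.I_sq

theorem degM_const_const {V E : Type} [DecidableEq V] [DecidableEq E] (v : V) (s : Finset E) :
    degM (fun _ => v) (fun _ => v) v s = 2 * #s := by
  simp [degM, two_mul]

section PowersetSums

variable {α R : Type*} [CommSemiring R]

theorem sum_powerset_pow_card (x : R) (u : Finset α) :
    ∑ t ∈ u.powerset, x ^ #t = (1 + x) ^ #u := by
  simpa [add_comm] using sum_pow_mul_eq_add_pow x 1 u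

theorem sum_powerset_card_mul_pow_card [DecidableEq α] (x : R) (u : Finset α) :
    ∑ t ∈ u.powerset, (#t : R) * x ^ #t = #u * x * (1 + x) ^ (#u - 1) := by
  induction u using Finset.induction with
  | empty => simp
  | @insert a u ha ih =>
    have hinsert : ∑ t ∈ u.powerset, (#(insert a t) : R) * x ^ #(insert a t) =
        x * ∑ t ∈ u.powerset, (#t : R) * x ^ #t + x * ∑ t ∈ u.powerset, x ^ #t := by
      rw [mul_sum, mul_sum, ← sum_add_distrib]
      refine sum_congr rfl fun t ht => ?_
      rw [card_insert_of_notMem fun h => ha (mem_powerset.mp ht h)]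
      push_cast
      ring
    rw [sum_powerset_insert ha, card_insert_of_notMem ha, hinsert, ih, sum_powerset_pow_card]
    rcases Nat.eq_zero_or_pos #u with h | h
    · simp [h]
    · obtain ⟨m, hm⟩ := Nat.exists_eq_add_of_lt h
      rw [hm, Nat.add_sub_cancel]
      push_cast
      ring

end PowersetSums

theorem thetaMI_bouquet {E : Type} [Fintype E] [DecidableEq E] (β : ℂ) :
    thetaMI (fun _ : E => ()) (fun _ => ()) β = ∑ s : Finset E, (-β) ^ #s * (1 - 2 * #s) := by
  have hI : Complex.I - Complex.I⁻¹ = 2 * Complex.I := by rw [Complex.inv_I]; ring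
  refine sum_congr rfl fun s _ => ?_
  rw [Fintype.prod_unique, degM_const_const, hI, chebFC_two_mul_I, pow_mul, Complex.I_sq,
    neg_pow β]
  push_cast
  ring

theorem stmt_15 (L : ℕ) (hL : 1 ≤ L) (β : ℂ) :
    -- the bouquet graph `B_L`: a single vertex and `L` loop edges
    thetaMI (fun _ : Fin L => (() : Unit)) (fun _ => ()) β =
      (1 - β) ^ (L - 1) * (1 + (2 * (L : ℂ) - 1) * β) := by
  obtain ⟨m, rfl⟩ := Nat.exists_eq_add_of_le' hL
  have hsplit : ∑ s : Finset (Fin (m + 1)), (-β) ^ #s * (1 - 2 * #s) =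
      ∑ s ∈ (univ : Finset (Fin (m + 1))).powerset, (-β) ^ #s -
        2 * ∑ s ∈ (univ : Finset (Fin (m + 1))).powerset, (#s : ℂ) * (-β) ^ #s := by
    rw [mul_sum, ← sum_sub_distrib, powerset_univ]
    exact sum_congr rfl fun _ _ => by ring
  rw [thetaMI_bouquet, hsplit, sum_powerset_pow_card, sum_powerset_card_mul_pow_card, card_univ,
    Fintype.card_fin, Nat.add_sub_cancel]
  push_cast
  ring
end
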